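/- arXiv:1202.3180 — 9 statements merged into one kernel-verified Lean document; each statement's English description precedes it below -/
import Mathlib

section
/- Let μ₁, μ₂ ∈ ℝ and let σ₁, σ₂, σ₁₂ be positive reals with σ₁₂ < σ₁ + σ₂. For every t ∈ (0,1), the t-quantile of the normal distribution N(μ₁+μ₂, σ₁₂²) is strictly less than the sum of the t-quantiles of N(μ₁, σ₁²) and N(μ₂, σ₂²) if and only if t > 1/2. (This is the normal-demand case of the elliptical-family result: when jointly normal demands are pooled so that D₁+D₂ ~ N(μ₁+μ₂, σ₁₂²) with σ₁₂ < σ₁+σ₂, pooling leads to lower inventory if and only if the margin ratio exceeds 0.5.) -/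
open MeasureTheory ProbabilityTheory Set Filter Topology

/-- The quantile function of a distribution on `ℝ`: `F⁻¹(t) = inf {x | t ≤ F(x)}`. -/
noncomputable def quantile (μ : Measure ℝ) (t : ℝ) : ℝ :=
  sInf {x : ℝ | t ≤ cdf μ x}

/-!
The `t`-quantile of `N(μ, σ²)` is `σ z + μ`, where `z` is the `t`-quantile of `N(0, 1)`
(for `σ = 0` too, the law then being a Dirac mass). The pooling inequality therefore reads
`(σ₁ + σ₂ - σ₁₂) z > 0`, i.e. `z > 0`. Since the quantile function is the lower adjoint of the
cdf, `0 < z` iff `cdf 0 < t`, and the symmetry of `N(0, 1)` gives `cdf 0 = 1 / 2`.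
-/

open scoped NNReal

section Quantile

variable (ν : Measure ℝ) {t : ℝ}

lemma quantile_le_iff (ht : t ∈ Ioo (0 : ℝ) 1) (x : ℝ) :
    quantile ν t ≤ x ↔ t ≤ cdf ν x := by
  have hne : {x : ℝ | t ≤ cdf ν x}.Nonempty :=
    ((tendsto_cdf_atTop ν).eventually (eventually_ge_nhds ht.2)).exists
  have hbdd : BddBelow {x : ℝ | t ≤ cdf ν x} := by
    obtain ⟨x₀, hx₀⟩ := ((tendsto_cdf_atBot ν).eventually (eventually_lt_nhds ht.1)).exists
    exact ⟨x₀, fun y hy => le_of_not_gt fun hyx => (hy.trans (monotone_cdf ν hyx.le)).not_gt hx₀⟩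
  refine ⟨fun hx => ?_, fun hx => csInf_le hbdd hx⟩
  -- right-continuity of the cdf puts the infimum into the set
  have hq : t ≤ cdf ν (quantile ν t) := by
    refine ge_of_tendsto (((cdf ν).right_continuous _).mono Ioi_subset_Ici_self) ?_
    filter_upwards [self_mem_nhdsWithin] with y hy
    obtain ⟨s, hs, hsy⟩ := exists_lt_of_csInf_lt hne hy
    exact hs.trans (monotone_cdf ν hsy.le)
  exact hq.trans (monotone_cdf ν hx)

lemma lt_quantile_iff (ht : t ∈ Ioo (0 : ℝ) 1) (x : ℝ) :
    x < quantile ν t ↔ cdf ν x < t := by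
  simpa only [not_le] using (quantile_le_iff ν ht x).not

lemma quantile_map_mul_add [IsProbabilityMeasure ν] {σ : ℝ} (hσ : 0 < σ) (μ : ℝ)
    (ht : t ∈ Ioo (0 : ℝ) 1) :
    quantile (ν.map (fun y => σ * y + μ)) t = σ * quantile ν t + μ := by
  have : IsProbabilityMeasure (ν.map (fun y => σ * y + μ)) :=
    Measure.isProbabilityMeasure_map (by fun_prop)
  refine eq_of_forall_ge_iff fun x => ?_
  rw [quantile_le_iff _ ht, cdf_eq_real, map_measureReal_apply (by fun_prop) measurableSet_Iic,
    ← le_sub_iff_add_le, ← le_div_iff₀' hσ, quantile_le_iff ν ht, cdf_eq_real]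
  congr! 2
  ext y
  simp [le_div_iff₀' hσ, le_sub_iff_add_le]

end Quantile

lemma quantile_dirac (a : ℝ) {t : ℝ} (ht : t ∈ Ioo (0 : ℝ) 1) :
    quantile (Measure.dirac a) t = a := by
  refine eq_of_forall_ge_iff fun x => ?_
  rw [quantile_le_iff _ ht, cdf_eq_real, measureReal_def, Measure.dirac_apply' _ measurableSet_Iic]
  by_cases hx : a ≤ x
  · simp [hx, ht.2.le]
  · simp [hx, ht.1]

lemma cdf_zero_eq_half_of_map_neg_eq (ν : Measure ℝ) [IsProbabilityMeasure ν]
    (hsymm : ν.map (fun x => -x) = ν) (h0 : ν {0} = 0) : cdf ν 0 = 1 / 2 := by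
  have hIic_eq_Ioi : ν.real (Iic 0) = ν.real (Ioi 0) := by
    rw [measureReal_congr (Ioi_ae_eq_Ici' h0)]
    conv_lhs => rw [← hsymm]
    rw [map_measureReal_apply (by fun_prop) measurableSet_Iic]
    congr 1
    ext y
    simp
  rw [← compl_Iic, probReal_compl_eq_one_sub measurableSet_Iic] at hIic_eq_Ioi
  rw [cdf_eq_real]
  linarith

lemma gaussianReal_eq_map_mul_add (μ : ℝ) (σ : ℝ≥0) :
    gaussianReal μ (σ ^ 2) = (gaussianReal 0 1).map (fun y => (σ : ℝ) * y + μ) := by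
  have : (fun y : ℝ => (σ : ℝ) * y + μ) = (· + μ) ∘ ((σ : ℝ) * ·) := rfl
  rw [this, ← Measure.map_map (by fun_prop) (by fun_prop), gaussianReal_map_const_mul,
    gaussianReal_map_add_const]
  congr 1
  · ring
  · ext; simp

lemma quantile_gaussianReal (μ : ℝ) (σ : ℝ≥0) {t : ℝ} (ht : t ∈ Ioo (0 : ℝ) 1) :
    quantile (gaussianReal μ (σ ^ 2)) t = σ * quantile (gaussianReal 0 1) t + μ := by
  rcases eq_zero_or_pos σ with rfl | hσ
  · simp [gaussianReal_zero_var, quantile_dirac μ ht]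
  · rw [gaussianReal_eq_map_mul_add, quantile_map_mul_add _ (NNReal.coe_pos.2 hσ) μ ht]

lemma cdf_gaussianReal_zero_one_zero : cdf (gaussianReal 0 1) 0 = 1 / 2 :=
  cdf_zero_eq_half_of_map_neg_eq _ (by simpa using gaussianReal_map_neg (μ := 0) (v := 1))
    (gaussianReal_absolutelyContinuous 0 one_ne_zero Real.volume_singleton)

lemma quantile_gaussianReal_zero_one_pos_iff {t : ℝ} (ht : t ∈ Ioo (0 : ℝ) 1) :
    0 < quantile (gaussianReal 0 1) t ↔ 1 / 2 < t := by
  rw [lt_quantile_iff _ ht, cdf_gaussianReal_zero_one_zero]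

theorem gaussian_pooling_iff_margin_gt_half_general (μ₁ μ₂ : ℝ) (σ₁ σ₂ σ₁₂ : NNReal)
    (hlt : σ₁₂ < σ₁ + σ₂)
    (t : ℝ) (ht : t ∈ Set.Ioo (0 : ℝ) 1) :
    quantile (gaussianReal (μ₁ + μ₂) (σ₁₂ ^ 2)) t <
        quantile (gaussianReal μ₁ (σ₁ ^ 2)) t + quantile (gaussianReal μ₂ (σ₂ ^ 2)) t
      ↔ 1 / 2 < t := by
  simp only [quantile_gaussianReal _ _ ht]
  rw [← quantile_gaussianReal_zero_one_pos_iff ht]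
  have hgap : (0 : ℝ) < σ₁ + σ₂ - σ₁₂ := sub_pos.2 (by exact_mod_cast hlt)
  rw [← mul_pos_iff_of_pos_left hgap]
  constructor <;> intro h <;> linarith

/-- For pooled normal demands with `σ₁₂ < σ₁ + σ₂`, pooling leads to a strictly lower
inventory level iff the margin ratio exceeds `1/2`. -/
theorem gaussian_pooling_iff_margin_gt_half (μ₁ μ₂ : ℝ) (σ₁ σ₂ σ₁₂ : NNReal)
    (h₁ : 0 < σ₁) (h₂ : 0 < σ₂) (h₁₂ : 0 < σ₁₂) (hlt : σ₁₂ < σ₁ + σ₂)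
    (t : ℝ) (ht : t ∈ Set.Ioo (0 : ℝ) 1) :
    quantile (gaussianReal (μ₁ + μ₂) (σ₁₂ ^ 2)) t <
        quantile (gaussianReal μ₁ (σ₁ ^ 2)) t + quantile (gaussianReal μ₂ (σ₂ ^ 2)) t
      ↔ 1 / 2 < t :=
  gaussian_pooling_iff_margin_gt_half_general μ₁ μ₂ σ₁ σ₂ σ₁₂ hlt t ht
end

section
/- Let (D₁, D₂) be a pair of real-valued random variables on a probability space whose joint law is invariant under the reflection (x, y) ↦ (2m₁ − x, 2m₂ − y) for some m₁, m₂ ∈ ℝ. Assume the cumulative distribution functions of D₁, D₂, and D₁+D₂ are continuous and strictly increasing. Then F_{D₁+D₂}⁻¹(1/2) = m₁ + m₂ = F_{D₁}⁻¹(1/2) + F_{D₂}⁻¹(1/2); that is, the pooling effect vanishes at margin ratio t = 1/2 for centrally symmetric joint demand distributions. -/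
open MeasureTheory ProbabilityTheory Set Filter Topology

/-! The reflection `(x, y) ↦ (2m₁ - x, 2m₂ - y)` fixing the joint law of `(D₁, D₂)`
induces reflections about `m₁`, `m₂` and `m₁ + m₂` fixing the laws of `D₁`, `D₂` and
`D₁ + D₂`.
For a law on `ℝ` symmetric about `m` and without an atom at `m`, the half-lines `(-∞, m]`
and `(m, ∞)` have equal mass, so `F(m) = 1/2`; strict monotonicity of `F` then makes `m`
the median `F⁻¹(1/2)`. -/

lemma Measure.map_map_eq_of_semiconj {Ω α β : Type*}
    [MeasurableSpace Ω] [MeasurableSpace α] [MeasurableSpace β]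
    {P : Measure Ω} {X : Ω → α} {R : α → α} {g : α → β} {r : β → β}
    (hX : Measurable X) (hR : Measurable R) (hg : Measurable g) (hr : Measurable r)
    (hsym : (P.map X).map R = P.map X) (hgR : r ∘ g = g ∘ R) :
    (P.map (g ∘ X)).map r = P.map (g ∘ X) := by
  rw [← Measure.map_map hg hX, Measure.map_map hr hg, hgR, ← Measure.map_map hg hR, hsym]

lemma measure_singleton_eq_zero_of_continuousAt_cdf (μ : Measure ℝ) [IsProbabilityMeasure μ]
    {x : ℝ} (hc : ContinuousAt (cdf μ) x) : μ {x} = 0 := by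
  rw [← measure_cdf μ, StieltjesFunction.measure_singleton,
    leftLim_eq_of_tendsto (hc.tendsto.mono_left nhdsWithin_le_nhds), sub_self, ENNReal.ofReal_zero]

lemma cdf_eq_half_of_map_reflect_eq (μ : Measure ℝ) [IsProbabilityMeasure μ] (m : ℝ)
    (hsym : μ.map (fun x => 2 * m - x) = μ) (hm : μ {m} = 0) : cdf μ m = 1 / 2 := by
  have hIic_Ioi : μ.real (Iic m) = μ.real (Ioi m) :=
    calc μ.real (Iic m) = (μ.map (fun x => 2 * m - x)).real (Iic m) := by rw [hsym]
      _ = μ.real (Ici m) := by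
        rw [map_measureReal_apply (by fun_prop) measurableSet_Iic]
        congr 1
        ext x
        simp only [mem_preimage, mem_Iic, mem_Ici]
        constructor <;> intro <;> linarith
      _ = μ.real (Ioi m) := measureReal_congr (Ioi_ae_eq_Ici' hm).symm
  have hsplit := measureReal_add_measureReal_compl (μ := μ) (measurableSet_Iic (a := m))
  rw [compl_Iic, ← hIic_Ioi, probReal_univ] at hsplit
  rw [cdf_eq_real]
  linarith

lemma quantile_cdf_of_strictMono (μ : Measure ℝ) (hμ : StrictMono (cdf μ)) (x : ℝ) :
    quantile μ (cdf μ x) = x := by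
  have : {y : ℝ | cdf μ x ≤ cdf μ y} = Ici x := by
    ext y
    simp only [mem_ofPred_eq, mem_Ici, hμ.le_iff_le]
  rw [quantile, this, csInf_Ici]

lemma quantile_half_eq_of_map_reflect_eq (μ : Measure ℝ) [IsProbabilityMeasure μ] (m : ℝ)
    (hsym : μ.map (fun x => 2 * m - x) = μ) (hc : Continuous (cdf μ))
    (hμ : StrictMono (cdf μ)) : quantile μ (1 / 2) = m := by
  rw [← cdf_eq_half_of_map_reflect_eq μ m hsym
    (measure_singleton_eq_zero_of_continuousAt_cdf μ hc.continuousAt),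
    quantile_cdf_of_strictMono μ hμ]

/-- For a centrally symmetric joint demand distribution with continuous strictly increasing
marginal and aggregate CDFs, the pooling effect vanishes at margin ratio `1/2`. -/
theorem pooling_effect_zero_at_half_of_symmetric {Ω : Type*} [MeasurableSpace Ω]
    (P : Measure Ω) [IsProbabilityMeasure P] (D₁ D₂ : Ω → ℝ)
    (hD₁ : Measurable D₁) (hD₂ : Measurable D₂) (m₁ m₂ : ℝ)
    (hsym : Measure.map (fun p : ℝ × ℝ => (2 * m₁ - p.1, 2 * m₂ - p.2))
        (Measure.map (fun ω => (D₁ ω, D₂ ω)) P) = Measure.map (fun ω => (D₁ ω, D₂ ω)) P)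
    (hc₁ : Continuous (cdf (Measure.map D₁ P)))
    (hc₂ : Continuous (cdf (Measure.map D₂ P)))
    (hcs : Continuous (cdf (Measure.map (fun ω => D₁ ω + D₂ ω) P)))
    (hm₁ : StrictMono (cdf (Measure.map D₁ P)))
    (hm₂ : StrictMono (cdf (Measure.map D₂ P)))
    (hms : StrictMono (cdf (Measure.map (fun ω => D₁ ω + D₂ ω) P))) :
    quantile (Measure.map (fun ω => D₁ ω + D₂ ω) P) (1 / 2) = m₁ + m₂ ∧
      m₁ + m₂ = quantile (Measure.map D₁ P) (1 / 2) + quantile (Measure.map D₂ P) (1 / 2) := by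
  have hpair : Measurable fun ω => (D₁ ω, D₂ ω) := hD₁.prodMk hD₂
  have hR : Measurable fun p : ℝ × ℝ => (2 * m₁ - p.1, 2 * m₂ - p.2) := by fun_prop
  have hsym₁ : (P.map D₁).map (fun x => 2 * m₁ - x) = P.map D₁ :=
    Measure.map_map_eq_of_semiconj (X := fun ω => (D₁ ω, D₂ ω)) hpair hR measurable_fst
      (by fun_prop) hsym rfl
  have hsym₂ : (P.map D₂).map (fun x => 2 * m₂ - x) = P.map D₂ :=
    Measure.map_map_eq_of_semiconj (X := fun ω => (D₁ ω, D₂ ω)) hpair hR measurable_snd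
      (by fun_prop) hsym rfl
  have hsyms : (P.map fun ω => D₁ ω + D₂ ω).map (fun x => 2 * (m₁ + m₂) - x) =
      P.map fun ω => D₁ ω + D₂ ω :=
    Measure.map_map_eq_of_semiconj (X := fun ω => (D₁ ω, D₂ ω))
      (g := fun p : ℝ × ℝ => p.1 + p.2) hpair hR (by fun_prop) (by fun_prop) hsym
      (by ext; simp only [Function.comp_apply]; ring)
  have := Measure.isProbabilityMeasure_map (μ := P) hD₁.aemeasurable
  have := Measure.isProbabilityMeasure_map (μ := P) hD₂.aemeasurable
  have := Measure.isProbabilityMeasure_map (μ := P) (hD₁.add hD₂).aemeasurable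
  rw [quantile_half_eq_of_map_reflect_eq _ _ hsyms hcs hms,
    quantile_half_eq_of_map_reflect_eq _ _ hsym₁ hc₁ hm₁,
    quantile_half_eq_of_map_reflect_eq _ _ hsym₂ hc₂ hm₂]
  exact ⟨rfl, rfl⟩
end

section
/- Let D₁ and D₂ be nonnegative identically distributed real-valued random variables on a common probability space with common survival function S(x) := P(D₁ > x), satisfying S(x) > 0 for all x. Assume S is regularly varying at infinity with tail index α where 0 < α < 1, i.e. for every x > 0, S(sx)/S(s) → x^{−α} as s → ∞, and assume the joint tail is negligible relative to the marginal tail: P(D₁ > x, D₂ > x)/S(x) → 0 as x → ∞. Then there exists a threshold t₀ ∈ (0,1) such that for all t ∈ [t₀, 1), F_{D₁+D₂}⁻¹(t) > F_{D₁}⁻¹(t) + F_{D₂}⁻¹(t); that is, the pooling effect is positive for all margin ratios at or above t₀. -/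
/-!
Choose `c > 2` with `2 c^{-α} > 1`, possible because `α < 1`. By inclusion–exclusion and
nonnegativity, `P(D₁ + D₂ > cs) ≥ 2 S(cs) - P(D₁ > cs, D₂ > cs)`, and after division by `S(s)`
the right-hand side tends to `2 c^{-α} > 1` by regular variation and the negligible joint tail.
So beyond some `M` the tail of the sum at `cs` dominates the marginal tail at `s`, which for
`t` close to `1` forces `F_{D₁+D₂}⁻¹(t) ≥ c F_{D₁}⁻¹(t) > 2 F_{D₁}⁻¹(t)`.
-/

open MeasureTheory ProbabilityTheory Set Filter Topology

section Quantile

variable {μ ν : Measure ℝ} {t x M c : ℝ}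

lemma lt_of_cdf_lt_of_le_cdf (hM : cdf μ M < t) (hx : t ≤ cdf μ x) : M < x := by
  by_contra! hxM
  exact (hx.trans (monotone_cdf μ hxM)).not_gt hM

lemma bddBelow_setOf_le_cdf (hM : cdf μ M < t) : BddBelow {x | t ≤ cdf μ x} :=
  ⟨M, fun _ hx => (lt_of_cdf_lt_of_le_cdf hM hx).le⟩

lemma nonempty_setOf_le_cdf (ht : t < 1) : {x | t ≤ cdf μ x}.Nonempty :=
  ((tendsto_cdf_atTop μ).eventually (eventually_ge_nhds ht)).exists

lemma le_quantile_of_cdf_lt (hM : cdf μ M < t) (ht : t < 1) : M ≤ quantile μ t :=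
  le_csInf (nonempty_setOf_le_cdf ht) fun _ hx => (lt_of_cdf_lt_of_le_cdf hM hx).le

lemma cdf_lt_of_lt_quantile (hM : cdf μ M < t) (hx : x < quantile μ t) : cdf μ x < t := by
  by_contra! htx
  exact (csInf_le (bddBelow_setOf_le_cdf hM) htx).not_gt hx

lemma quantile_mul_le_quantile (hc : 0 < c) (hM : cdf μ M < t) (ht : t < 1)
    (hcmp : ∀ x ≥ M, cdf ν (x * c) ≤ cdf μ x) :
    quantile μ t * c ≤ quantile ν t := by
  refine le_csInf (nonempty_setOf_le_cdf ht) fun y hy => ?_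
  by_contra! hyq
  have hyc : y / c < quantile μ t := (div_lt_iff₀ hc).mpr hyq
  have hmax : cdf μ (max M (y / c)) < t := by
    rw [(monotone_cdf μ).map_max]
    exact max_lt hM (cdf_lt_of_lt_quantile hM hyc)
  have hy_le : y ≤ max M (y / c) * c := (div_le_iff₀ hc).mp (le_max_right _ _)
  exact lt_irrefl t <| calc t ≤ cdf ν y := hy
    _ ≤ cdf ν (max M (y / c) * c) := monotone_cdf ν hy_le
    _ ≤ cdf μ (max M (y / c)) := hcmp _ (le_max_left _ _)
    _ < t := hmax

end Quantile

section Tail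

variable {Ω : Type*} [MeasurableSpace Ω] {P : Measure Ω}

lemma cdf_map_eq_one_sub_measureReal [IsProbabilityMeasure P] {X : Ω → ℝ} (hX : Measurable X)
    (x : ℝ) : cdf (P.map X) x = 1 - P.real {ω | x < X ω} := by
  have := Measure.isProbabilityMeasure_map (μ := P) hX.aemeasurable
  have hcompl : {ω | x < X ω} = (X ⁻¹' Iic x)ᶜ := by ext; simp
  rw [cdf_eq_real, map_measureReal_apply hX measurableSet_Iic, hcompl,
    measureReal_compl (hX measurableSet_Iic), probReal_univ, sub_sub_cancel]

lemma measureReal_lt_add_measureReal_lt_le [IsFiniteMeasure P] {X Y : Ω → ℝ}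
    (hY : Measurable Y) (hX₀ : ∀ ω, 0 ≤ X ω) (hY₀ : ∀ ω, 0 ≤ Y ω) (x : ℝ) :
    P.real {ω | x < X ω} + P.real {ω | x < Y ω} ≤
      P.real {ω | x < X ω + Y ω} + P.real {ω | x < X ω ∧ x < Y ω} := by
  have hunion : {ω | x < X ω} ∪ {ω | x < Y ω} ⊆ {ω | x < X ω + Y ω} := by
    rintro ω (h | h)
    · exact h.trans_le (le_add_of_nonneg_right (hY₀ ω))
    · exact h.trans_le (le_add_of_nonneg_left (hX₀ ω))
  have hincl_excl := measureReal_union_add_inter (μ := P) (s := {ω | x < X ω})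
    (t := {ω | x < Y ω}) (hY measurableSet_Ioi)
  rw [← ofPred_and] at hincl_excl
  linarith [measureReal_mono (μ := P) hunion]

end Tail

lemma exists_two_lt_and_one_lt_two_mul_rpow_neg {α : ℝ} (hα0 : 0 < α) (hα1 : α < 1) :
    ∃ c : ℝ, 2 < c ∧ 1 < 2 * c ^ (-α) := by
  obtain ⟨β, hβ1, hβα⟩ := exists_between ((one_lt_inv₀ hα0).mpr hα1)
  have hαβ : α * β < 1 := by
    simpa [mul_inv_cancel₀ hα0.ne'] using mul_lt_mul_of_pos_left hβα hα0
  refine ⟨(2 : ℝ) ^ β, ?_, ?_⟩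
  · simpa using Real.rpow_lt_rpow_of_exponent_lt one_lt_two hβ1
  · calc 1 < (2 : ℝ) ^ (1 + β * -α) := Real.one_lt_rpow one_lt_two (by linarith)
      _ = 2 * ((2 : ℝ) ^ β) ^ (-α) := by
        rw [Real.rpow_add two_pos, Real.rpow_one, Real.rpow_mul zero_le_two]

/-- The ratio `(2 S(sc) - J(sc)) / S(s)` tends to `2 L`. -/
lemma eventually_le_two_mul_sub {S J : ℝ → ℝ} {c L : ℝ} (hS : ∀ x, 0 < S x) (hc : 0 < c)
    (hL : 1 < 2 * L) (hreg : Tendsto (fun s => S (s * c) / S s) atTop (𝓝 L))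
    (hJ : Tendsto (fun x => J x / S x) atTop (𝓝 0)) :
    ∀ᶠ s in atTop, S s ≤ 2 * S (s * c) - J (s * c) := by
  have hlim : Tendsto (fun s => S (s * c) / S s * (2 - J (s * c) / S (s * c))) atTop
      (𝓝 (L * (2 - 0))) :=
    hreg.mul (tendsto_const_nhds.sub (hJ.comp (tendsto_id.atTop_mul_const hc)))
  filter_upwards [hlim.eventually (eventually_gt_nhds (by linarith : 1 < L * (2 - 0)))] with s hs
  have hS₁ := hS s
  have hS₂ := hS (s * c)
  rw [div_mul_eq_mul_div, mul_sub, mul_div_cancel₀ _ hS₂.ne', lt_div_iff₀ hS₁] at hs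
  linarith

/-- For identically distributed nonnegative demands with regularly varying tails of index
`0 < α < 1` and negligible joint tail, the pooling effect is positive for all margin ratios
at or above some threshold `t₀ ∈ (0,1)`. -/
theorem pooling_effect_pos_of_regularly_varying {Ω : Type*} [MeasurableSpace Ω]
    (P : Measure Ω) [IsProbabilityMeasure P] (D₁ D₂ : Ω → ℝ)
    (hD₁ : Measurable D₁) (hD₂ : Measurable D₂)
    (hnn₁ : ∀ ω, 0 ≤ D₁ ω) (hnn₂ : ∀ ω, 0 ≤ D₂ ω)
    (hid : Measure.map D₁ P = Measure.map D₂ P)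
    (S : ℝ → ℝ) (hS : ∀ x, S x = (P {ω | x < D₁ ω}).toReal)
    (hSpos : ∀ x, 0 < S x)
    (α : ℝ) (hα0 : 0 < α) (hα1 : α < 1)
    (hreg : ∀ x > (0 : ℝ), Tendsto (fun s => S (s * x) / S s) atTop (𝓝 (x ^ (-α))))
    (hjoint : Tendsto (fun x => (P {ω | x < D₁ ω ∧ x < D₂ ω}).toReal / S x) atTop (𝓝 0)) :
    ∃ t₀ ∈ Set.Ioo (0 : ℝ) 1, ∀ t ∈ Set.Ico t₀ 1,
      quantile (Measure.map D₁ P) t + quantile (Measure.map D₂ P) t <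
        quantile (Measure.map (fun ω => D₁ ω + D₂ ω) P) t := by
  simp only [← measureReal_def] at hS hjoint
  have hcdf₁ := cdf_map_eq_one_sub_measureReal (P := P) hD₁
  have hcdf_sum := cdf_map_eq_one_sub_measureReal (P := P) (X := fun ω => D₁ ω + D₂ ω)
    (hD₁.add hD₂)
  have hS₂ (x : ℝ) : P.real {ω | x < D₂ ω} = S x := by
    have := congrArg (cdf · x) hid
    simp only [hcdf₁, cdf_map_eq_one_sub_measureReal hD₂] at this
    linarith [hS x]
  obtain ⟨c, hc2, hcα⟩ := exists_two_lt_and_one_lt_two_mul_rpow_neg hα0 hα1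
  have hpooled : ∀ᶠ s in atTop, cdf (P.map fun ω => D₁ ω + D₂ ω) (s * c) ≤ cdf (P.map D₁) s := by
    filter_upwards [eventually_le_two_mul_sub hSpos (by linarith) hcα (hreg c (by linarith))
      hjoint] with s hs
    rw [hcdf₁, hcdf_sum]
    linarith [measureReal_lt_add_measureReal_lt_le (P := P) hD₂ hnn₁ hnn₂ (s * c), hS s, hS (s * c),
      hS₂ (s * c)]
  obtain ⟨M, hM⟩ := eventually_atTop.mp (hpooled.and (eventually_gt_atTop 0))
  have hM1 : cdf (P.map D₁) M < 1 := by
    rw [hcdf₁, ← hS]; linarith [hSpos M]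
  refine ⟨(cdf (P.map D₁) M + 1) / 2, ⟨by linarith [cdf_nonneg (P.map D₁) M], by linarith⟩,
    fun t ⟨ht₀, ht1⟩ => ?_⟩
  have hMt : cdf (P.map D₁) M < t := by linarith
  have hMq : M ≤ quantile (P.map D₁) t := le_quantile_of_cdf_lt hMt ht1
  have hqc := quantile_mul_le_quantile (by linarith) hMt ht1 fun x hx => (hM x hx).1
  rw [← hid]
  nlinarith [(hM M le_rfl).2]
end

section
/- Let 0 < α < 1 and let D₁ and D₂ be independent random variables, each distributed according to the Pareto distribution with scale parameter 1 and shape parameter α (so P(Dᵢ > x) = x^{−α} for x ≥ 1), which has infinite mean. Then for every t ∈ (0,1), F_{D₁+D₂}⁻¹(t) > F_{D₁}⁻¹(t) + F_{D₂}⁻¹(t); that is, the pooling effect is positive at every margin ratio, so the threshold of the pooling effect is 0. -/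
open MeasureTheory ProbabilityTheory Set Filter Topology

/-! If `D₁, D₂ ≥ 1` are independent with common cdf `F`, then
`{D₁ + D₂ ≤ s} ⊆ {D₁ ≤ s - 1} ∩ {D₂ ≤ s - 1}`, so `F_{D₁+D₂}(s) ≤ F(s - 1)²` and therefore
`F_{D₁+D₂}⁻¹(p) ≥ 1 + F⁻¹(√p)`. For Pareto(1, α) we have `F⁻¹(p) = (1 - p)^(-1/α)`; with
`β = 1/α ≥ 1` and `v = √p`, Bernoulli's inequalities `(1 ± v)^β ≥ 1 ± βv` give
`1 + (1 - v)^(-β) > 2 (1 - v²)^(-β)`, that is, `1 + F⁻¹(√p) > 2 F⁻¹(p)`. -/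

lemma two_lt_rpow_add_rpow_mul_rpow {β v : ℝ} (hβ : 1 ≤ β) (hv0 : 0 < v) (hv1 : v < 1) :
    2 < (1 + v) ^ β + (1 + v) ^ β * (1 - v) ^ β := by
  have hplus : 1 + β * v ≤ (1 + v) ^ β := one_add_mul_self_le_rpow_one_add (by linarith) hβ
  have hminus : 1 - β * v ≤ (1 - v) ^ β := by
    simpa [← sub_eq_add_neg] using one_add_mul_self_le_rpow_one_add (s := -v) (by linarith) hβ
  have hpos : 0 < (1 - v) ^ β := Real.rpow_pos_of_pos (by linarith) β
  have hβv : 0 < β * v := by positivity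
  -- If `βv ≥ 1` then already `(1 + v)^β ≥ 2`; otherwise the bound is `(1 + βv)(2 - βv) > 2`.
  rcases le_or_gt 1 (β * v) with h | h
  · nlinarith
  · nlinarith

lemma two_mul_one_sub_sq_rpow_neg_lt {β v : ℝ} (hβ : 1 ≤ β) (hv0 : 0 < v) (hv1 : v < 1) :
    2 * (1 - v ^ 2) ^ (-β) < 1 + (1 - v) ^ (-β) := by
  have hA : 0 < (1 + v) ^ β := Real.rpow_pos_of_pos (by linarith) β
  have hB : 0 < (1 - v) ^ β := Real.rpow_pos_of_pos (by linarith) β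
  rw [show 1 - v ^ 2 = (1 + v) * (1 - v) by ring, Real.rpow_neg (by nlinarith),
    Real.mul_rpow (by linarith) (by linarith), Real.rpow_neg (by linarith)]
  calc 2 * ((1 + v) ^ β * (1 - v) ^ β)⁻¹
      < ((1 + v) ^ β + (1 + v) ^ β * (1 - v) ^ β) * ((1 + v) ^ β * (1 - v) ^ β)⁻¹ := by
        gcongr; exact two_lt_rpow_add_rpow_mul_rpow hβ hv0 hv1
    _ = 1 + ((1 - v) ^ β)⁻¹ := by field_simp; ring

namespace ProbabilityTheory

lemma cdf_lt_of_lt_quantile {μ : Measure ℝ} {p y : ℝ} (hp : 0 < p) (hy : y < quantile μ p) :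
    cdf μ y < p := by
  by_contra! hpy
  obtain ⟨x₀, hx₀⟩ := ((tendsto_cdf_atBot μ).eventually (gt_mem_nhds hp)).exists
  have hbdd : BddBelow {x | p ≤ cdf μ x} :=
    ⟨x₀, fun x hx => le_of_not_gt fun hlt => (hx.trans (monotone_cdf μ hlt.le)).not_gt hx₀⟩
  exact hy.not_ge (csInf_le hbdd hpy)

lemma le_quantile_of_cdf_lt {μ : Measure ℝ} [IsProbabilityMeasure μ] {p s : ℝ} (hp : p < 1)
    (hs : cdf μ s < p) : s ≤ quantile μ p := by
  obtain ⟨x, hx⟩ := ((tendsto_cdf_atTop μ).eventually (eventually_ge_nhds hp)).exists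
  refine le_csInf ⟨x, hx⟩ fun x hx => le_of_not_gt fun hxs => ?_
  exact (hs.trans_le (hx.trans (monotone_cdf μ hxs.le))).false

lemma cdf_map_add_le_sq {Ω : Type*} [MeasurableSpace Ω] {P : Measure Ω} [IsProbabilityMeasure P]
    {X Y : Ω → ℝ} {μ : Measure ℝ} (hX : Measurable X) (hY : Measurable Y) (hXY : IndepFun X Y P)
    (hXμ : P.map X = μ) (hYμ : P.map Y = μ) {a : ℝ} (ha : ∀ᵐ x ∂μ, a ≤ x) (s : ℝ) :
    cdf (P.map fun ω => X ω + Y ω) s ≤ cdf μ (s - a) ^ 2 := by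
  have : IsProbabilityMeasure μ := hXμ ▸ Measure.isProbabilityMeasure_map hX.aemeasurable
  have : IsProbabilityMeasure (P.map fun ω => X ω + Y ω) :=
    Measure.isProbabilityMeasure_map (hX.add hY).aemeasurable
  have hXa : ∀ᵐ ω ∂P, a ≤ X ω := ae_of_ae_map hX.aemeasurable (hXμ ▸ ha)
  have hYa : ∀ᵐ ω ∂P, a ≤ Y ω := ae_of_ae_map hY.aemeasurable (hYμ ▸ ha)
  have hcdf : ∀ Z : Ω → ℝ, Measurable Z → P.map Z = μ →
      P (Z ⁻¹' Iic (s - a)) = ENNReal.ofReal (cdf μ (s - a)) := by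
    intro Z hZ hZμ
    rw [ofReal_cdf, ← hZμ, Measure.map_apply hZ measurableSet_Iic]
  have hinter := hXY.measure_inter_preimage_eq_mul (Iic (s - a)) (Iic (s - a))
    measurableSet_Iic measurableSet_Iic
  rw [hcdf X hX hXμ, hcdf Y hY hYμ, ← ENNReal.ofReal_mul (cdf_nonneg _ _), ← sq] at hinter
  rw [← ENNReal.ofReal_le_ofReal_iff (by positivity), ofReal_cdf,
    Measure.map_apply (f := fun ω => X ω + Y ω) (hX.add hY) measurableSet_Iic, ← hinter]
  refine measure_mono_ae ?_
  filter_upwards [hXa, hYa] with ω hXω hYω (hω : X ω + Y ω ≤ s)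
  exact ⟨show X ω ≤ s - a by linarith, show Y ω ≤ s - a by linarith⟩

lemma add_quantile_sqrt_le_quantile_map_add {Ω : Type*} [MeasurableSpace Ω] {P : Measure Ω}
    [IsProbabilityMeasure P] {X Y : Ω → ℝ} {μ : Measure ℝ} (hX : Measurable X) (hY : Measurable Y)
    (hXY : IndepFun X Y P) (hXμ : P.map X = μ) (hYμ : P.map Y = μ) {a : ℝ} (ha : ∀ᵐ x ∂μ, a ≤ x)
    {p : ℝ} (hp0 : 0 < p) (hp1 : p < 1) :
    a + quantile μ (√p) ≤ quantile (P.map fun ω => X ω + Y ω) p := by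
  have : IsProbabilityMeasure (P.map fun ω => X ω + Y ω) :=
    Measure.isProbabilityMeasure_map (hX.add hY).aemeasurable
  refine le_of_forall_lt_imp_le_of_dense fun s hs => le_quantile_of_cdf_lt hp1 ?_
  have hF : cdf μ (s - a) < √p := cdf_lt_of_lt_quantile (Real.sqrt_pos.2 hp0) (by linarith)
  calc cdf (P.map fun ω => X ω + Y ω) s ≤ cdf μ (s - a) ^ 2 :=
        cdf_map_add_le_sq hX hY hXY hXμ hYμ ha s
    _ < √p ^ 2 := pow_lt_pow_left₀ hF (cdf_nonneg μ _) two_ne_zero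
    _ = p := Real.sq_sqrt hp0.le

variable {t r x : ℝ}

lemma paretoMeasure_Iio : paretoMeasure t r (Iio t) = 0 := by
  rw [paretoMeasure, withDensity_apply _ measurableSet_Iio, lintegral_paretoPDF_of_le le_rfl]

lemma ae_le_paretoMeasure : ∀ᵐ y ∂paretoMeasure t r, t ≤ y :=
  (measure_eq_zero_iff_ae_notMem.1 paretoMeasure_Iio).mono fun _ hy => not_lt.1 hy

lemma paretoMeasure_Ioi (ht : 0 < t) (hr : 0 < r) (hx : t ≤ x) :
    paretoMeasure t r (Ioi x) = ENNReal.ofReal ((x / t) ^ (-r)) := by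
  have hx0 : 0 < x := ht.trans_le hx
  have hint : IntegrableOn (fun y => r * t ^ r * y ^ (-(r + 1))) (Ioi x) :=
    (integrableOn_Ioi_rpow_of_lt (by linarith) hx0).const_mul _
  rw [paretoMeasure, withDensity_apply _ measurableSet_Ioi,
    setLIntegral_congr_fun measurableSet_Ioi fun y (hy : x < y) => paretoPDF_of_le (hx.trans hy.le),
    ← ofReal_integral_eq_lintegral_ofReal hint, integral_const_mul,
    integral_Ioi_rpow_of_lt (by linarith) hx0]
  · congr 1
    rw [Real.div_rpow hx0.le ht.le, Real.rpow_neg ht.le, show -(r + 1) + 1 = -r by ring]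
    field_simp
  · filter_upwards [ae_restrict_mem measurableSet_Ioi] with y (hy : x < y)
    have : 0 < y := hx0.trans hy
    positivity

lemma cdf_paretoMeasure_of_lt (ht : 0 < t) (hr : 0 < r) (hx : x < t) :
    cdf (paretoMeasure t r) x = 0 := by
  have := isProbabilityMeasure_paretoMeasure ht hr
  rw [cdf_eq_real, measureReal_def, measure_mono_null (Iic_subset_Iio.2 hx) paretoMeasure_Iio,
    ENNReal.toReal_zero]

lemma cdf_paretoMeasure_of_le (ht : 0 < t) (hr : 0 < r) (hx : t ≤ x) :
    cdf (paretoMeasure t r) x = 1 - (x / t) ^ (-r) := by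
  have := isProbabilityMeasure_paretoMeasure ht hr
  rw [cdf_eq_real, ← compl_Ioi, probReal_compl_eq_one_sub measurableSet_Ioi, measureReal_def,
    paretoMeasure_Ioi ht hr hx,
    ENNReal.toReal_ofReal (Real.rpow_nonneg (div_pos (ht.trans_le hx) ht).le _)]

lemma le_cdf_paretoMeasure_iff (ht : 0 < t) (hr : 0 < r) {p : ℝ} (hp0 : 0 < p) (hp1 : p < 1) :
    p ≤ cdf (paretoMeasure t r) x ↔ t * (1 - p) ^ (-r⁻¹) ≤ x := by
  have h1p : 0 < 1 - p := by linarith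
  have hq : t ≤ t * (1 - p) ^ (-r⁻¹) :=
    le_mul_of_one_le_right ht.le (Real.one_le_rpow_of_pos_of_le_one_of_nonpos h1p (by linarith)
      (neg_nonpos.2 (inv_nonneg.2 hr.le)))
  rcases lt_or_ge x t with hxt | hxt
  · rw [cdf_paretoMeasure_of_lt ht hr hxt]
    exact iff_of_false hp0.not_ge (by linarith)
  · rw [cdf_paretoMeasure_of_le ht hr hxt, le_sub_comm, ← le_div_iff₀' ht, neg_inv,
      Real.rpow_inv_le_iff_of_neg h1p (div_pos (ht.trans_le hxt) ht) (neg_neg_of_pos hr)]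

lemma quantile_paretoMeasure (ht : 0 < t) (hr : 0 < r) {p : ℝ} (hp0 : 0 < p) (hp1 : p < 1) :
    quantile (paretoMeasure t r) p = t * (1 - p) ^ (-r⁻¹) := by
  have hset : {x | p ≤ cdf (paretoMeasure t r) x} = Ici (t * (1 - p) ^ (-r⁻¹)) :=
    Set.ext fun x => le_cdf_paretoMeasure_iff ht hr hp0 hp1
  rw [quantile, hset, csInf_Ici]

lemma not_integrable_id_paretoMeasure (ht : 0 < t) (hr0 : 0 < r) (hr1 : r ≤ 1) :
    ¬ Integrable id (paretoMeasure t r) := by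
  intro hint
  have hpdf : Measurable (paretoPDF t r) := (measurable_paretoPDFReal t r).ennreal_ofReal
  rw [paretoMeasure, integrable_withDensity_iff hpdf
    (ae_of_all _ fun _ => ENNReal.ofReal_lt_top)] at hint
  have hIoi : IntegrableOn (fun y : ℝ => y ^ (-r)) (Ioi t) := by
    refine IntegrableOn.congr_fun (hint.integrableOn.const_mul (r * t ^ r)⁻¹)
      (fun y (hy : t < y) => ?_) measurableSet_Ioi
    have hy0 : 0 < y := ht.trans hy
    rw [id, paretoPDF_of_le hy.le, ENNReal.toReal_ofReal (by positivity),
      show -(r + 1) = -r - 1 by ring, Real.rpow_sub_one hy0.ne']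
    field_simp
  linarith [(integrableOn_Ioi_rpow_iff ht).1 hIoi]

end ProbabilityTheory

/-- For independent Pareto(1, α) demands with `0 < α < 1` (infinite mean), the pooling
effect is positive at every margin ratio, so the threshold is `0`. -/
theorem pooling_effect_pos_of_pareto {Ω : Type*} [MeasurableSpace Ω]
    (P : Measure Ω) [IsProbabilityMeasure P] (D₁ D₂ : Ω → ℝ)
    (hD₁ : Measurable D₁) (hD₂ : Measurable D₂)
    (α : ℝ) (hα0 : 0 < α) (hα1 : α < 1)
    (hind : IndepFun D₁ D₂ P)
    (h₁ : Measure.map D₁ P = paretoMeasure 1 α)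
    (h₂ : Measure.map D₂ P = paretoMeasure 1 α) :
    ¬ Integrable D₁ P ∧
      ∀ t ∈ Set.Ioo (0 : ℝ) 1,
        quantile (Measure.map D₁ P) t + quantile (Measure.map D₂ P) t <
          quantile (Measure.map (fun ω => D₁ ω + D₂ ω) P) t := by
  refine ⟨fun hint => not_integrable_id_paretoMeasure one_pos hα0 hα1.le ?_, fun p ⟨hp0, hp1⟩ => ?_⟩
  · rw [← h₁]
    exact (integrable_map_measure aestronglyMeasurable_id hD₁.aemeasurable).2 hint
  have hv0 : 0 < √p := Real.sqrt_pos.2 hp0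
  have hv1 : √p < 1 := (Real.sqrt_lt' one_pos).2 (by linarith)
  have hβ : 1 ≤ α⁻¹ := (one_le_inv₀ hα0).2 hα1.le
  calc quantile (P.map D₁) p + quantile (P.map D₂) p = 2 * (1 - √p ^ 2) ^ (-α⁻¹) := by
        rw [h₁, h₂, quantile_paretoMeasure one_pos hα0 hp0 hp1, Real.sq_sqrt hp0.le]
        ring
    _ < 1 + (1 - √p) ^ (-α⁻¹) := two_mul_one_sub_sq_rpow_neg_lt hβ hv0 hv1
    _ = 1 + quantile (paretoMeasure 1 α) (√p) := by
        rw [quantile_paretoMeasure one_pos hα0 hv0 hv1, one_mul]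
    _ ≤ quantile (P.map fun ω => D₁ ω + D₂ ω) p :=
        add_quantile_sqrt_le_quantile_map_add hD₁ hD₂ hind h₁ h₂ ae_le_paretoMeasure hp0 hp1
end

section
/- Let D be a nonnegative integrable real-valued random variable on a probability space, and let 0 < c < p be real numbers (unit cost and unit price). Set q := F_D⁻¹((p−c)/p), the ((p−c)/p)-quantile of D. Then q maximizes the expected newsvendor profit: for every Q ∈ ℝ, p·E[min(D, Q)] − c·Q ≤ p·E[min(D, q)] − c·q. -/
open MeasureTheory ProbabilityTheory Set Filter Topology

/-!
Everything only depends on the law `μ` of `D`. Pointwise,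
`min x Q - min x q ≤ (Q - q) · 1{x > q}` for `q ≤ Q` and
`(q - Q) · 1{x ≥ q} ≤ min x q - min x Q` for `Q ≤ q`,
so `q` is optimal as soon as `p · μ(q, ∞) ≤ c ≤ p · μ[q, ∞)`. For `t = (p - c)/p` the
`t`-quantile satisfies this: `F(q) ≥ t` by right continuity of `F`, and `F(q⁻) ≤ t` because
`F < t` on `(-∞, q)`.
-/

namespace ProbabilityTheory

variable {μ : Measure ℝ} {t s : ℝ}

lemma bddBelow_setOf_le_cdf (ht : 0 < t) : BddBelow {x | t ≤ cdf μ x} := by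
  obtain ⟨a, ha⟩ :=
    eventually_atBot.1 ((tendsto_cdf_atBot μ).eventually (eventually_lt_nhds ht))
  exact ⟨a, fun x hx => le_of_not_ge fun hxa => (ha x hxa).not_ge hx⟩

lemma nonempty_setOf_le_cdf (ht : t < 1) : {x | t ≤ cdf μ x}.Nonempty :=
  ((tendsto_cdf_atTop μ).eventually (eventually_ge_nhds ht)).exists

lemma cdf_lt_of_lt_quantile_s10 (ht : 0 < t) (hs : s < quantile μ t) : cdf μ s < t :=
  not_le.1 fun h => notMem_of_lt_csInf hs (bddBelow_setOf_le_cdf ht) h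

lemma le_cdf_quantile (ht : t < 1) : t ≤ cdf μ (quantile μ t) := by
  rw [← (cdf μ).iInf_Ioi_eq]
  refine le_ciInf fun r => ?_
  obtain ⟨x, hx, hxr⟩ := exists_lt_of_csInf_lt (nonempty_setOf_le_cdf ht) r.2
  exact hx.trans (monotone_cdf μ hxr.le)

lemma leftLim_cdf_quantile_le (ht : 0 < t) : Function.leftLim (cdf μ) (quantile μ t) ≤ t := by
  rw [(monotone_cdf μ).leftLim_eq_sSup]
  refine csSup_le (nonempty_Iio.image _) ?_
  rintro _ ⟨s, hs, rfl⟩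
  exact (cdf_lt_of_lt_quantile_s10 ht hs).le

variable [IsProbabilityMeasure μ]

lemma measureReal_Ioi_quantile_le (ht : t < 1) :
    μ.real (Ioi (quantile μ t)) ≤ 1 - t := by
  rw [← compl_Iic, measureReal_compl measurableSet_Iic, probReal_univ, ← cdf_eq_real]
  linarith [le_cdf_quantile (μ := μ) ht]

lemma measureReal_Ici_eq_one_sub_leftLim_cdf (x : ℝ) :
    μ.real (Ici x) = 1 - Function.leftLim (cdf μ) x := by
  have hleftLim_le_one : Function.leftLim (cdf μ) x ≤ 1 :=
    ((monotone_cdf μ).leftLim_le le_rfl).trans (cdf_le_one μ x)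
  rw [measureReal_def, ← measure_cdf μ, (cdf μ).measure_Ici (tendsto_cdf_atTop μ),
    ENNReal.toReal_ofReal (sub_nonneg.2 hleftLim_le_one), measure_cdf μ]

lemma one_sub_le_measureReal_Ici_quantile (ht : 0 < t) :
    1 - t ≤ μ.real (Ici (quantile μ t)) := by
  rw [measureReal_Ici_eq_one_sub_leftLim_cdf]
  linarith [leftLim_cdf_quantile_le (μ := μ) ht]

end ProbabilityTheory

lemma min_sub_min_le_indicator {q Q : ℝ} (hqQ : q ≤ Q) (x : ℝ) :
    min x Q - min x q ≤ (Ioi q).indicator (fun _ => Q - q) x := by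
  by_cases hx : q < x
  · rw [indicator_of_mem (mem_Ioi.2 hx), min_eq_right hx.le]
    linarith [min_le_right x Q]
  · rw [indicator_of_notMem (by simpa using hx), min_eq_left (not_lt.1 hx),
      min_eq_left ((not_lt.1 hx).trans hqQ), sub_self]

lemma indicator_le_min_sub_min {q Q : ℝ} (hQq : Q ≤ q) (x : ℝ) :
    (Ici q).indicator (fun _ => q - Q) x ≤ min x q - min x Q := by
  by_cases hx : q ≤ x
  · rw [indicator_of_mem (mem_Ici.2 hx), min_eq_right hx, min_eq_right (hQq.trans hx)]
  · rw [indicator_of_notMem (by simpa using hx)]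
    linarith [min_le_left x Q, min_eq_left (not_le.1 hx).le]

noncomputable def newsvendorProfit (μ : Measure ℝ) (p c Q : ℝ) : ℝ :=
  p * ∫ x, min x Q ∂μ - c * Q

section Newsvendor

variable {μ : Measure ℝ} [IsFiniteMeasure μ] {p c q Q : ℝ}

lemma integrable_min_const (hμ : Integrable id μ) (Q : ℝ) : Integrable (fun x => min x Q) μ :=
  hμ.inf (integrable_const Q)

lemma integral_min_sub_integral_min_le (hμ : Integrable id μ) (hqQ : q ≤ Q) :
    ∫ x, min x Q ∂μ - ∫ x, min x q ∂μ ≤ (Q - q) * μ.real (Ioi q) := by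
  rw [← integral_sub (integrable_min_const hμ Q) (integrable_min_const hμ q), mul_comm,
    ← smul_eq_mul, ← integral_indicator_const _ measurableSet_Ioi]
  exact integral_mono ((integrable_min_const hμ Q).sub (integrable_min_const hμ q))
    ((integrable_const _).indicator measurableSet_Ioi) (min_sub_min_le_indicator hqQ)

lemma le_integral_min_sub_integral_min (hμ : Integrable id μ) (hQq : Q ≤ q) :
    (q - Q) * μ.real (Ici q) ≤ ∫ x, min x q ∂μ - ∫ x, min x Q ∂μ := by
  rw [← integral_sub (integrable_min_const hμ q) (integrable_min_const hμ Q), mul_comm,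
    ← smul_eq_mul, ← integral_indicator_const _ measurableSet_Ici]
  exact integral_mono ((integrable_const _).indicator measurableSet_Ici)
    ((integrable_min_const hμ q).sub (integrable_min_const hμ Q)) (indicator_le_min_sub_min hQq)

theorem newsvendorProfit_le_of_measureReal_Ioi_le_of_le_measureReal_Ici (hμ : Integrable id μ)
    (hp : 0 ≤ p) (hIoi : p * μ.real (Ioi q) ≤ c) (hIci : c ≤ p * μ.real (Ici q)) (Q : ℝ) :
    newsvendorProfit μ p c Q ≤ newsvendorProfit μ p c q := by
  unfold newsvendorProfit
  rcases le_total q Q with hqQ | hQq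
  · have := mul_le_mul_of_nonneg_left (integral_min_sub_integral_min_le hμ hqQ) hp
    nlinarith
  · have := mul_le_mul_of_nonneg_left (le_integral_min_sub_integral_min hμ hQq) hp
    nlinarith

end Newsvendor

theorem newsvendorProfit_le_quantile {μ : Measure ℝ} [IsProbabilityMeasure μ]
    (hμ : Integrable id μ) {p c : ℝ} (hc : 0 < c) (hcp : c < p) (Q : ℝ) :
    newsvendorProfit μ p c Q ≤ newsvendorProfit μ p c (quantile μ ((p - c) / p)) := by
  have hp : 0 < p := hc.trans hcp
  have ht₀ : 0 < (p - c) / p := div_pos (sub_pos.2 hcp) hp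
  have ht₁ : (p - c) / p < 1 := (div_lt_one hp).2 (by linarith)
  have hcritical : p * (1 - (p - c) / p) = c := by field_simp; ring
  refine newsvendorProfit_le_of_measureReal_Ioi_le_of_le_measureReal_Ici hμ hp.le ?_ ?_ Q
  · calc p * μ.real (Ioi _) ≤ p * (1 - (p - c) / p) :=
          mul_le_mul_of_nonneg_left (measureReal_Ioi_quantile_le ht₁) hp.le
      _ = c := hcritical
  · calc c = p * (1 - (p - c) / p) := hcritical.symm
      _ ≤ p * μ.real (Ici _) :=
          mul_le_mul_of_nonneg_left (one_sub_le_measureReal_Ici_quantile ht₀) hp.le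

theorem newsvendor_quantile_maximizes_profit_general {Ω : Type*} [MeasurableSpace Ω]
    (P : Measure Ω) [IsProbabilityMeasure P] (D : Ω → ℝ)
    (hint : Integrable D P)
    (p c : ℝ) (hc : 0 < c) (hcp : c < p) :
    ∀ Q : ℝ,
      p * ∫ ω, min (D ω) Q ∂P - c * Q ≤
        p * ∫ ω, min (D ω) (quantile (Measure.map D P) ((p - c) / p)) ∂P
          - c * quantile (Measure.map D P) ((p - c) / p) := by
  have hD : AEMeasurable D P := hint.aemeasurable
  have : IsProbabilityMeasure (P.map D) := Measure.isProbabilityMeasure_map hD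
  have hμ : Integrable id (P.map D) := (integrable_map_measure aestronglyMeasurable_id hD).2 hint
  have hmin (Q : ℝ) : ∫ ω, min (D ω) Q ∂P = ∫ x, min x Q ∂(P.map D) :=
    (integral_map hD (continuous_id.min continuous_const).aestronglyMeasurable).symm
  intro Q
  simpa only [newsvendorProfit, hmin] using newsvendorProfit_le_quantile hμ hc hcp Q

/-- The `((p-c)/p)`-quantile of demand maximizes the expected newsvendor profit. -/
theorem newsvendor_quantile_maximizes_profit {Ω : Type*} [MeasurableSpace Ω]
    (P : Measure Ω) [IsProbabilityMeasure P] (D : Ω → ℝ)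
    (hDm : Measurable D) (hnn : ∀ ω, 0 ≤ D ω) (hint : Integrable D P)
    (p c : ℝ) (hc : 0 < c) (hcp : c < p) :
    ∀ Q : ℝ,
      p * ∫ ω, min (D ω) Q ∂P - c * Q ≤
        p * ∫ ω, min (D ω) (quantile (Measure.map D P) ((p - c) / p)) ∂P
          - c * quantile (Measure.map D P) ((p - c) / p) :=
  newsvendor_quantile_maximizes_profit_general P D hint p c hc hcp
end

section
/- Let D₁ and D₂ be nonnegative integrable real-valued random variables on a common probability space and let 0 < c < p. Then for all Q₁, Q₂ ∈ ℝ, p·E[min(D₁+D₂, Q₁+Q₂)] − c·(Q₁+Q₂) ≥ (p·E[min(D₁, Q₁)] − c·Q₁) + (p·E[min(D₂, Q₂)] − c·Q₂). Consequently, the optimal expected profit of the pooled system is at least the sum of the optimal expected profits of the two dedicated systems: sup_Q (p·E[min(D₁+D₂, Q)] − c·Q) ≥ sup_{Q₁} (p·E[min(D₁, Q₁)] − c·Q₁) + sup_{Q₂} (p·E[min(D₂, Q₂)] − c·Q₂). That is, pooling always leads to higher expected profits. -/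
open MeasureTheory

/-- Pooling always leads to higher expected newsvendor profits: the pooled profit at
`Q₁ + Q₂` dominates the sum of dedicated profits at `Q₁` and `Q₂`, and consequently the
optimal pooled profit dominates the sum of the optimal dedicated profits. -/
theorem pooling_increases_profit {Ω : Type*} [MeasurableSpace Ω]
    (ℙ : Measure Ω) [IsProbabilityMeasure ℙ] (D₁ D₂ : Ω → ℝ)
    (hD₁m : Measurable D₁) (hD₂m : Measurable D₂)
    (hnn₁ : ∀ ω, 0 ≤ D₁ ω) (hnn₂ : ∀ ω, 0 ≤ D₂ ω)
    (hint₁ : Integrable D₁ ℙ) (hint₂ : Integrable D₂ ℙ)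
    (p c : ℝ) (hc : 0 < c) (hcp : c < p) :
    (∀ Q₁ Q₂ : ℝ,
      (p * ∫ ω, min (D₁ ω) Q₁ ∂ℙ - c * Q₁) + (p * ∫ ω, min (D₂ ω) Q₂ ∂ℙ - c * Q₂) ≤
        p * ∫ ω, min (D₁ ω + D₂ ω) (Q₁ + Q₂) ∂ℙ - c * (Q₁ + Q₂)) ∧
    (⨆ Q₁ : ℝ, p * ∫ ω, min (D₁ ω) Q₁ ∂ℙ - c * Q₁) +
        (⨆ Q₂ : ℝ, p * ∫ ω, min (D₂ ω) Q₂ ∂ℙ - c * Q₂) ≤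
      ⨆ Q : ℝ, p * ∫ ω, min (D₁ ω + D₂ ω) Q ∂ℙ - c * Q := by
  have hp : 0 < p := hc.trans hcp
  -- integrability of truncated demands
  have hI : ∀ (D : Ω → ℝ), Integrable D ℙ → ∀ Q : ℝ,
      Integrable (fun ω => min (D ω) Q) ℙ := fun D h Q => h.inf (integrable_const Q)
  -- main pointwise-in-Q inequality
  have main : ∀ Q₁ Q₂ : ℝ,
      (p * ∫ ω, min (D₁ ω) Q₁ ∂ℙ - c * Q₁) + (p * ∫ ω, min (D₂ ω) Q₂ ∂ℙ - c * Q₂) ≤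
        p * ∫ ω, min (D₁ ω + D₂ ω) (Q₁ + Q₂) ∂ℙ - c * (Q₁ + Q₂) := by
    intro Q₁ Q₂
    have hptw : ∀ ω, min (D₁ ω) Q₁ + min (D₂ ω) Q₂ ≤ min (D₁ ω + D₂ ω) (Q₁ + Q₂) := by
      intro ω
      exact le_min (add_le_add (min_le_left _ _) (min_le_left _ _))
        (add_le_add (min_le_right _ _) (min_le_right _ _))
    have hint : (∫ ω, min (D₁ ω) Q₁ ∂ℙ) + (∫ ω, min (D₂ ω) Q₂ ∂ℙ) ≤
        ∫ ω, min (D₁ ω + D₂ ω) (Q₁ + Q₂) ∂ℙ := by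
      rw [← integral_add (hI D₁ hint₁ Q₁) (hI D₂ hint₂ Q₂)]
      exact integral_mono ((hI D₁ hint₁ Q₁).add (hI D₂ hint₂ Q₂))
        (hI _ (hint₁.add hint₂) _) hptw
    nlinarith [hint]
  refine ⟨main, ?_⟩
  -- upper bounds on the profit functions
  have hub : ∀ (D : Ω → ℝ), (∀ ω, 0 ≤ D ω) → Integrable D ℙ → ∀ Q : ℝ,
      p * ∫ ω, min (D ω) Q ∂ℙ - c * Q ≤ p * ∫ ω, D ω ∂ℙ := by
    intro D hnn h Q
    have hDnn : 0 ≤ ∫ ω, D ω ∂ℙ := integral_nonneg hnn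
    rcases le_or_gt 0 Q with hQ | hQ
    · have : (∫ ω, min (D ω) Q ∂ℙ) ≤ ∫ ω, D ω ∂ℙ :=
        integral_mono (hI D h Q) h (fun ω => min_le_left _ _)
      nlinarith
    · have : (∫ ω, min (D ω) Q ∂ℙ) ≤ Q := by
        calc (∫ ω, min (D ω) Q ∂ℙ) ≤ ∫ _ω, Q ∂ℙ :=
              integral_mono (hI D h Q) (integrable_const Q) (fun ω => min_le_right _ _)
          _ = Q := by simp
      nlinarith
  have hbdd₁ : BddAbove (Set.range fun Q₁ : ℝ => p * ∫ ω, min (D₁ ω) Q₁ ∂ℙ - c * Q₁) :=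
    ⟨p * ∫ ω, D₁ ω ∂ℙ, by rintro x ⟨Q, rfl⟩; exact hub D₁ hnn₁ hint₁ Q⟩
  have hbdd₂ : BddAbove (Set.range fun Q₂ : ℝ => p * ∫ ω, min (D₂ ω) Q₂ ∂ℙ - c * Q₂) :=
    ⟨p * ∫ ω, D₂ ω ∂ℙ, by rintro x ⟨Q, rfl⟩; exact hub D₂ hnn₂ hint₂ Q⟩
  have hbdd : BddAbove (Set.range fun Q : ℝ => p * ∫ ω, min (D₁ ω + D₂ ω) Q ∂ℙ - c * Q) :=
    ⟨p * ∫ ω, (D₁ ω + D₂ ω) ∂ℙ, by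
      rintro x ⟨Q, rfl⟩
      exact hub (fun ω => D₁ ω + D₂ ω) (fun ω => add_nonneg (hnn₁ ω) (hnn₂ ω))
        (hint₁.add hint₂) Q⟩
  rw [add_comm]
  rw [← le_sub_iff_add_le]
  refine ciSup_le fun Q₂ => ?_
  rw [le_sub_iff_add_le, add_comm, ← le_sub_iff_add_le]
  refine ciSup_le fun Q₁ => ?_
  rw [le_sub_iff_add_le]
  exact (main Q₁ Q₂).trans (le_ciSup hbdd (Q₁ + Q₂))
end

section
/- (Sklar's theorem, bivariate case with continuous marginals.) Let μ be a probability measure on ℝ × ℝ whose marginal distributions (the pushforwards under the two coordinate projections) have continuous cumulative distribution functions F₁ and F₂. Then there exists a unique probability measure ν on ℝ × ℝ that is concentrated on [0,1] × [0,1] and whose two marginals are both the uniform distribution on [0,1] (i.e., ν is a copula), such that for all x, y ∈ ℝ: μ((−∞, x] × (−∞, y]) = ν([0, F₁(x)] × [0, F₂(y)]). -/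
/-!
The copula is the law of `(F₁ X, F₂ Y)` for `(X, Y) ∼ μ`, where `F₁, F₂` are the marginal
distribution functions. As `Fᵢ` is continuous, it pushes the `i`-th marginal forward to the uniform
law on `[0,1]`, and `{t | Fᵢ t ≤ Fᵢ x}` differs from `Iic x` by a null set; this gives the identity.
For uniqueness, the intermediate value theorem writes every `(u, v) ∈ (0,1)²` as `(F₁ x, F₂ y)`, so
the identity determines a copula on the rectangles `[0,u] × [0,v]`; the uniform marginals determine
it on the remaining quadrants `Iic a ×ˢ Iic b`, and these quadrants generate the Borel σ-algebra.
-/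

open MeasureTheory ProbabilityTheory Set Filter

instance MeasureTheory.Measure.isProbabilityMeasure_map_fst {α β : Type*} [MeasurableSpace α]
    [MeasurableSpace β] (μ : Measure (α × β)) [IsProbabilityMeasure μ] :
    IsProbabilityMeasure (μ.map Prod.fst) :=
  isProbabilityMeasure_map measurable_fst.aemeasurable

instance MeasureTheory.Measure.isProbabilityMeasure_map_snd {α β : Type*} [MeasurableSpace α]
    [MeasurableSpace β] (μ : Measure (α × β)) [IsProbabilityMeasure μ] :
    IsProbabilityMeasure (μ.map Prod.snd) :=
  isProbabilityMeasure_map measurable_snd.aemeasurable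

lemma MeasureTheory.measure_prod_congr_of_ae_eq {α β : Type*} [MeasurableSpace α]
    [MeasurableSpace β] {μ : Measure (α × β)} {s s' : Set α} {t t' : Set β}
    (hs : s =ᵐ[μ.map Prod.fst] s') (ht : t =ᵐ[μ.map Prod.snd] t') :
    μ (s ×ˢ t) = μ (s' ×ˢ t') :=
  measure_congr <| (Measure.QuasiMeasurePreserving.preimage_ae_eq ⟨measurable_fst, .rfl⟩ hs).inter
    (Measure.QuasiMeasurePreserving.preimage_ae_eq ⟨measurable_snd, .rfl⟩ ht)

theorem MeasureTheory.Measure.ext_of_Iic_prod_Iic (μ ν : Measure (ℝ × ℝ)) [IsProbabilityMeasure μ]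
    [IsProbabilityMeasure ν] (h : ∀ a b : ℝ, μ (Iic a ×ˢ Iic b) = ν (Iic a ×ˢ Iic b)) : μ = ν := by
  have hspan : IsCountablySpanning (range (Iic : ℝ → Set ℝ)) :=
    ⟨fun n : ℕ => Iic (n : ℝ), fun n => mem_range_self _,
      iUnion_eq_univ_iff.2 fun x => (exists_nat_ge x).imp fun _ hn => hn⟩
  have hgen : MeasurableSpace.generateFrom (range (Iic : ℝ → Set ℝ)) = Real.measurableSpace :=
    (borel_eq_generateFrom_Iic ℝ).symm.trans (BorelSpace.measurable_eq (α := ℝ)).symm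
  refine ext_of_generate_finite _ (generateFrom_eq_prod hgen hgen hspan hspan).symm
    (isPiSystem_Iic.prod isPiSystem_Iic) ?_ (by simp)
  rintro _ ⟨_, ⟨a, rfl⟩, _, ⟨b, rfl⟩, rfl⟩
  exact h a b

namespace ProbabilityTheory

section ContinuousCDF

variable {m : Measure ℝ}

lemma exists_cdf_eq_of_continuous (hF : Continuous (cdf m)) {u : ℝ} (hu : u ∈ Ioo 0 1) :
    ∃ x, cdf m x = u := by
  obtain ⟨a, ha⟩ := ((tendsto_cdf_atBot m).eventually_lt_const hu.1).exists
  obtain ⟨b, hb⟩ := ((tendsto_cdf_atTop m).eventually_const_lt hu.2).exists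
  exact intermediate_value_univ a b hF ⟨ha.le, hb.le⟩

lemma exists_setOf_cdf_le_eq_Iic (hF : Continuous (cdf m)) {u : ℝ} (hu : u < 1)
    (hne : {t | cdf m t ≤ u}.Nonempty) : ∃ s, {t | cdf m t ≤ u} = Iic s ∧ cdf m s = u := by
  set S := {t | cdf m t ≤ u}
  obtain ⟨b, hb⟩ := ((tendsto_cdf_atTop m).eventually_const_lt hu).exists_forall_of_atTop
  have hbdd : BddAbove S := ⟨b, fun t ht => not_lt.1 fun hbt => (hb t hbt.le).not_ge ht⟩
  have hmem : sSup S ∈ S := (isClosed_le hF continuous_const).csSup_mem hne hbdd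
  have hright : Ioi (sSup S) ⊆ {t | u ≤ cdf m t} :=
    fun t ht => show u ≤ cdf m t from (not_le.1 fun htS => (le_csSup hbdd htS).not_gt ht).le
  have hle : u ≤ cdf m (sSup S) :=
    (isClosed_le continuous_const hF).closure_subset_iff.2 hright (by simp)
  exact ⟨sSup S, Subset.antisymm (fun t => le_csSup hbdd)
    (fun t ht => (monotone_cdf m ht).trans hmem), le_antisymm hmem hle⟩

lemma measure_setOf_cdf_le [IsProbabilityMeasure m] (hF : Continuous (cdf m)) {u : ℝ} (hu : u ∈ Icc 0 1) :
    m {t | cdf m t ≤ u} = ENNReal.ofReal u := by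
  rcases hu.2.lt_or_eq with hu1 | rfl
  · rcases {t | cdf m t ≤ u}.eq_empty_or_nonempty with hemp | hne
    · have hu0 : u ≤ 0 := ge_of_tendsto (tendsto_cdf_atBot m)
        (Eventually.of_forall fun t => (not_le.1 (eq_empty_iff_forall_notMem.1 hemp t)).le)
      rw [hemp, le_antisymm hu0 hu.1]
      simp
    · obtain ⟨s, hS, hs⟩ := exists_setOf_cdf_le_eq_Iic hF hu1 hne
      rw [hS, ← ofReal_cdf, hs]
  · simp [cdf_le_one]

theorem map_cdf_of_continuous [IsProbabilityMeasure m] (hF : Continuous (cdf m)) :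
    m.map (cdf m) = volume.restrict (Icc 0 1) := by
  have := Measure.isProbabilityMeasure_map (μ := m) hF.measurable.aemeasurable
  refine Measure.ext_of_Iic _ _ fun u => ?_
  rw [Measure.map_apply hF.measurable measurableSet_Iic, Measure.restrict_apply measurableSet_Iic]
  change m {t | cdf m t ≤ u} = _
  rcases lt_or_ge u 0 with hu0 | hu0
  · have : ∀ t, ¬ cdf m t ≤ u := fun t => not_le.2 (hu0.trans_le (cdf_nonneg m t))
    have : Iic u ∩ Icc 0 1 = ∅ := by
      ext; simp only [mem_inter_iff, mem_Iic, mem_Icc, mem_empty_iff_false, iff_false]; grind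
    simp [*]
  rcases le_or_gt u 1 with hu1 | hu1
  · rw [measure_setOf_cdf_le hF ⟨hu0, hu1⟩]
    have : Iic u ∩ Icc 0 1 = Icc 0 u := by
      ext; simp only [mem_inter_iff, mem_Iic, mem_Icc]; grind
    rw [this, Real.volume_Icc, sub_zero]
  · have : ∀ t, cdf m t ≤ u := fun t => (cdf_le_one m t).trans hu1.le
    have : Iic u ∩ Icc 0 1 = Icc 0 1 := inter_eq_right.2 fun t ht => ht.2.trans hu1.le
    simp [*]

lemma setOf_cdf_le_cdf_ae_eq [IsProbabilityMeasure m] (hF : Continuous (cdf m)) (x : ℝ) :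
    {t | cdf m t ≤ cdf m x} =ᵐ[m] Iic x :=
  (ae_eq_of_subset_of_measure_ge (fun _ ht => monotone_cdf m ht)
    ((measure_setOf_cdf_le hF ⟨cdf_nonneg m x, cdf_le_one m x⟩).trans (ofReal_cdf m x)).le
    nullMeasurableSet_Iic (measure_ne_top _ _)).symm

end ContinuousCDF

structure IsCopula (ν : Measure (ℝ × ℝ)) : Prop where
  measure_compl_unitSquare : ν ((Icc (0 : ℝ) 1 ×ˢ Icc (0 : ℝ) 1)ᶜ) = 0
  map_fst : ν.map Prod.fst = volume.restrict (Icc 0 1)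
  map_snd : ν.map Prod.snd = volume.restrict (Icc 0 1)

namespace IsCopula

variable {ν ν' : Measure (ℝ × ℝ)}

lemma isProbabilityMeasure (hν : IsCopula ν) : IsProbabilityMeasure ν := by
  constructor
  rw [← preimage_univ (f := Prod.fst), ← Measure.map_apply measurable_fst MeasurableSet.univ,
    hν.map_fst]
  simp

lemma measure_congr_of_inter_unitSquare (hν : IsCopula ν) {s t : Set (ℝ × ℝ)}
    (h : s ∩ Icc 0 1 ×ˢ Icc 0 1 = t ∩ Icc 0 1 ×ˢ Icc 0 1) : ν s = ν t := by
  rw [← measure_inter_conull hν.measure_compl_unitSquare, h,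
    measure_inter_conull hν.measure_compl_unitSquare]

lemma measure_Icc_prod_Icc (hν : IsCopula ν) (u v : ℝ) :
    ν (Icc 0 u ×ˢ Icc 0 v) = ν (Iic u ×ˢ Iic v) :=
  hν.measure_congr_of_inter_unitSquare <| by
    ext; simp only [mem_inter_iff, mem_prod, mem_Iic, mem_Icc]; grind

lemma measure_Iic_prod_of_nonpos (hν : IsCopula ν) {a : ℝ} (ha : a ≤ 0) (t : Set ℝ) :
    ν (Iic a ×ˢ t) = 0 := by
  refine measure_mono_null (prod_subset_preimage_fst _ _) ?_
  rw [← Measure.map_apply measurable_fst measurableSet_Iic, hν.map_fst,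
    Measure.restrict_apply measurableSet_Iic]
  exact measure_mono_null (fun x hx => le_antisymm (hx.1.trans ha) hx.2.1) Real.volume_singleton

lemma measure_prod_Iic_of_nonpos (hν : IsCopula ν) {b : ℝ} (hb : b ≤ 0) (s : Set ℝ) :
    ν (s ×ˢ Iic b) = 0 := by
  refine measure_mono_null (prod_subset_preimage_snd _ _) ?_
  rw [← Measure.map_apply measurable_snd measurableSet_Iic, hν.map_snd,
    Measure.restrict_apply measurableSet_Iic]
  exact measure_mono_null (fun x hx => le_antisymm (hx.1.trans hb) hx.2.1) Real.volume_singleton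

lemma measure_Iic_prod_Iic_of_one_le_left (hν : IsCopula ν) {a : ℝ} (ha : 1 ≤ a) (b : ℝ) :
    ν (Iic a ×ˢ Iic b) = ν.map Prod.snd (Iic b) := by
  rw [Measure.map_apply measurable_snd measurableSet_Iic]
  refine hν.measure_congr_of_inter_unitSquare <| by
    ext; simp only [mem_inter_iff, mem_prod, mem_preimage, mem_Iic, mem_Icc]; grind

lemma measure_Iic_prod_Iic_of_one_le_right (hν : IsCopula ν) (a : ℝ) {b : ℝ} (hb : 1 ≤ b) :
    ν (Iic a ×ˢ Iic b) = ν.map Prod.fst (Iic a) := by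
  rw [Measure.map_apply measurable_fst measurableSet_Iic]
  refine hν.measure_congr_of_inter_unitSquare <| by
    ext; simp only [mem_inter_iff, mem_prod, mem_preimage, mem_Iic, mem_Icc]; grind

theorem ext (hν : IsCopula ν) (hν' : IsCopula ν')
    (h : ∀ u ∈ Ioo (0 : ℝ) 1, ∀ v ∈ Ioo (0 : ℝ) 1,
      ν (Icc 0 u ×ˢ Icc 0 v) = ν' (Icc 0 u ×ˢ Icc 0 v)) : ν = ν' := by
  have := hν.isProbabilityMeasure
  have := hν'.isProbabilityMeasure
  refine Measure.ext_of_Iic_prod_Iic _ _ fun a b => ?_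
  rcases le_or_gt a 0 with ha0 | ha0
  · rw [hν.measure_Iic_prod_of_nonpos ha0, hν'.measure_Iic_prod_of_nonpos ha0]
  rcases le_or_gt b 0 with hb0 | hb0
  · rw [hν.measure_prod_Iic_of_nonpos hb0, hν'.measure_prod_Iic_of_nonpos hb0]
  rcases le_or_gt 1 a with ha1 | ha1
  · rw [hν.measure_Iic_prod_Iic_of_one_le_left ha1, hν'.measure_Iic_prod_Iic_of_one_le_left ha1,
      hν.map_snd, hν'.map_snd]
  rcases le_or_gt 1 b with hb1 | hb1
  · rw [hν.measure_Iic_prod_Iic_of_one_le_right a hb1,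
      hν'.measure_Iic_prod_Iic_of_one_le_right a hb1, hν.map_fst, hν'.map_fst]
  rw [← hν.measure_Icc_prod_Icc, ← hν'.measure_Icc_prod_Icc]
  exact h a ⟨ha0, ha1⟩ b ⟨hb0, hb1⟩

end IsCopula

noncomputable def copulaOf (μ : Measure (ℝ × ℝ)) : Measure (ℝ × ℝ) :=
  μ.map (Prod.map (cdf (μ.map Prod.fst)) (cdf (μ.map Prod.snd)))

section copulaOf

variable {μ : Measure (ℝ × ℝ)} [IsProbabilityMeasure μ]

lemma measurable_prodMap_cdf (μ : Measure (ℝ × ℝ)) :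
    Measurable (Prod.map (cdf (μ.map Prod.fst)) (cdf (μ.map Prod.snd))) :=
  (monotone_cdf _).measurable.prodMap (monotone_cdf _).measurable

lemma isCopula_copulaOf (hF₁ : Continuous (cdf (μ.map Prod.fst)))
    (hF₂ : Continuous (cdf (μ.map Prod.snd))) : IsCopula (copulaOf μ) where
  measure_compl_unitSquare := by
    rw [copulaOf, Measure.map_apply (measurable_prodMap_cdf μ)
      (measurableSet_Icc.prod measurableSet_Icc).compl]
    convert measure_empty (μ := μ)
    ext p
    simp [-Icc_prod_Icc, cdf_nonneg, cdf_le_one]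
  map_fst := by
    rw [copulaOf, Measure.map_map measurable_fst (measurable_prodMap_cdf μ), Prod.map_fst',
      ← Measure.map_map hF₁.measurable measurable_fst, map_cdf_of_continuous hF₁]
  map_snd := by
    rw [copulaOf, Measure.map_map measurable_snd (measurable_prodMap_cdf μ), Prod.map_snd',
      ← Measure.map_map hF₂.measurable measurable_snd, map_cdf_of_continuous hF₂]

lemma copulaOf_Icc_prod_Icc (hF₁ : Continuous (cdf (μ.map Prod.fst)))
    (hF₂ : Continuous (cdf (μ.map Prod.snd))) (x y : ℝ) :
    copulaOf μ (Icc 0 (cdf (μ.map Prod.fst) x) ×ˢ Icc 0 (cdf (μ.map Prod.snd) y)) =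
      μ (Iic x ×ˢ Iic y) := by
  rw [copulaOf, Measure.map_apply (measurable_prodMap_cdf μ)
    (measurableSet_Icc.prod measurableSet_Icc), preimage_prod_map_prod]
  simp only [preimage, mem_Icc, cdf_nonneg, true_and]
  exact measure_prod_congr_of_ae_eq (setOf_cdf_le_cdf_ae_eq hF₁ x) (setOf_cdf_le_cdf_ae_eq hF₂ y)

end copulaOf

end ProbabilityTheory

open ProbabilityTheory

/-- Sklar's theorem (bivariate case, continuous marginals): there is a unique copula `ν`
(probability measure concentrated on the unit square, with uniform marginals on `[0,1]`)
such that `μ((−∞,x]×(−∞,y]) = ν([0,F₁(x)]×[0,F₂(y)])` for all `x, y`. -/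
theorem sklar_bivariate (μ : Measure (ℝ × ℝ)) [IsProbabilityMeasure μ]
    (hF₁ : Continuous (cdf (μ.map Prod.fst))) (hF₂ : Continuous (cdf (μ.map Prod.snd))) :
    ∃! ν : Measure (ℝ × ℝ),
      IsProbabilityMeasure ν ∧
      ν ((Set.Icc (0 : ℝ) 1 ×ˢ Set.Icc (0 : ℝ) 1)ᶜ) = 0 ∧
      ν.map Prod.fst = volume.restrict (Set.Icc (0 : ℝ) 1) ∧
      ν.map Prod.snd = volume.restrict (Set.Icc (0 : ℝ) 1) ∧
      ∀ x y : ℝ,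
        μ (Set.Iic x ×ˢ Set.Iic y) =
          ν (Set.Icc 0 (cdf (μ.map Prod.fst) x) ×ˢ Set.Icc 0 (cdf (μ.map Prod.snd) y)) := by
  have hC := isCopula_copulaOf hF₁ hF₂
  refine ⟨copulaOf μ, ⟨hC.isProbabilityMeasure, hC.1, hC.2, hC.3,
    fun x y => (copulaOf_Icc_prod_Icc hF₁ hF₂ x y).symm⟩, ?_⟩
  rintro ν ⟨-, hν₀, hν₁, hν₂, hν⟩
  refine IsCopula.ext ⟨hν₀, hν₁, hν₂⟩ hC fun u hu v hv => ?_
  obtain ⟨x, rfl⟩ := exists_cdf_eq_of_continuous hF₁ hu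
  obtain ⟨y, rfl⟩ := exists_cdf_eq_of_continuous hF₂ hv
  rw [← hν, copulaOf_Icc_prod_Icc hF₁ hF₂]
end

section
/- For every θ ≥ 1, there exists a probability measure ν on ℝ × ℝ concentrated on [0,1] × [0,1] whose two marginals are each the uniform distribution on [0,1], such that for all u, v ∈ (0,1]: ν([0,u] × [0,v]) = exp(−((−ln u)^θ + (−ln v)^θ)^{1/θ}). That is, the Gumbel function C_Gu(u,v) = exp(−((−ln u)^θ + (−ln v)^θ)^{1/θ}) is a copula. -/
/-!
Let `F t v = ∂C/∂u (t, v)`. With `x = -log t`, `y = -log v` and `A = (x^θ + y^θ)^(1/θ)` one has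
`F t v = e^(x - A) (x / A)^(θ - 1)`, a decreasing function of `A` when `θ ≥ 1`, equal to `1` at
`v = 1` and tending to `0` as `v → 0`. So for each `t ∈ (0, 1)` the map `v ↦ F t v` is the CDF of
a law on `[0, 1]`, and `ν := Unif[0, 1] ⊗ (law with CDF F t)` has uniform first marginal and
`ν ([0, u] × [0, v]) = ∫₀ᵘ F t v dt = C(u, v)`, by the fundamental theorem of calculus and
`C(0+, v) = 0`. At `u = 1` this reads `C(1, v) = v`: the second marginal is uniform as well.
-/

open MeasureTheory ProbabilityTheory Set Filter Topology Real

instance : IsProbabilityMeasure (volume.restrict (Icc (0 : ℝ) 1)) :=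
  ⟨by simp⟩

structure IsUnitCDFFamily (F : ℝ → StieltjesFunction ℝ) : Prop where
  measurable (v : ℝ) : Measurable fun t ↦ F t v
  eq_zero (t : ℝ) {v : ℝ} (hv : v ≤ 0) : F t v = 0
  eq_one (t : ℝ) {v : ℝ} (hv : 1 ≤ v) : F t v = 1

namespace IsUnitCDFFamily

variable {F : ℝ → StieltjesFunction ℝ} (hF : IsUnitCDFFamily F)
include hF

lemma tendsto_atBot (t : ℝ) : Tendsto (F t) atBot (𝓝 0) :=
  tendsto_const_nhds.congr' <| (eventually_le_atBot 0).mono fun _ hv ↦ (hF.eq_zero t hv).symm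

lemma tendsto_atTop (t : ℝ) : Tendsto (F t) atTop (𝓝 1) :=
  tendsto_const_nhds.congr' <| (eventually_ge_atTop 1).mono fun _ hv ↦ (hF.eq_one t hv).symm

lemma nonneg (t v : ℝ) : 0 ≤ F t v :=
  hF.eq_zero t (min_le_right v 0) ▸ (F t).mono (min_le_left v 0)

lemma le_one (t v : ℝ) : F t v ≤ 1 :=
  hF.eq_one t (le_max_right v 1) ▸ (F t).mono (le_max_left v 1)

lemma intervalIntegrable (v a b : ℝ) : IntervalIntegrable (fun t ↦ F t v) volume a b := by
  refine (intervalIntegrable_const (c := (1 : ℝ))).mono_fun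
    (hF.measurable v).aestronglyMeasurable <| Eventually.of_forall fun t ↦ ?_
  simpa [abs_of_nonneg (hF.nonneg t v)] using hF.le_one t v

lemma lintegral_ofReal {a b : ℝ} (hab : a ≤ b) (v : ℝ) :
    ∫⁻ t in Icc a b, ENNReal.ofReal (F t v) = ENNReal.ofReal (∫ t in a..b, F t v) := by
  rw [intervalIntegral.integral_of_le hab, ← integral_Icc_eq_integral_Ioc,
    ofReal_integral_eq_lintegral_ofReal]
  · exact (intervalIntegrable_iff_integrableOn_Icc_of_le hab).1 (hF.intervalIntegrable v a b)
  · exact Eventually.of_forall fun t ↦ hF.nonneg t v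

noncomputable def kernel : Kernel ℝ ℝ where
  toFun t := (F t).measure
  measurable' :=
    StieltjesFunction.measurable_measure hF.measurable hF.tendsto_atBot hF.tendsto_atTop

instance : IsMarkovKernel hF.kernel :=
  ⟨fun t ↦ (F t).isProbabilityMeasure (hF.tendsto_atBot t) (hF.tendsto_atTop t)⟩

lemma kernel_Iic (t v : ℝ) : hF.kernel t (Iic v) = ENNReal.ofReal (F t v) := by
  rw [kernel, Kernel.coe_mk, (F t).measure_Iic (hF.tendsto_atBot t), sub_zero]

lemma kernel_Icc (t v : ℝ) : hF.kernel t (Icc 0 v) = ENNReal.ofReal (F t v) := by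
  have hIio : hF.kernel t (Iio 0) = 0 := measure_mono_null Iio_subset_Iic_self <| by
    rw [hF.kernel_Iic, hF.eq_zero t le_rfl, ENNReal.ofReal_zero]
  have hIcc : Icc 0 v = Iic v \ Iio 0 := by ext w; simp [and_comm]
  rw [← hF.kernel_Iic, hIcc, measure_sdiff_null hIio]

/-- The law of `(U, V)` where `U` is uniform on `[0, 1]` and `V` given `U = t` has CDF `F t`. -/
noncomputable def jointMeasure : Measure (ℝ × ℝ) :=
  volume.restrict (Icc 0 1) ⊗ₘ hF.kernel

instance : IsProbabilityMeasure hF.jointMeasure := by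
  unfold jointMeasure; infer_instance

lemma jointMeasure_Icc_prod_Icc {u : ℝ} (hu₀ : 0 ≤ u) (hu₁ : u ≤ 1) (v : ℝ) :
    hF.jointMeasure (Icc 0 u ×ˢ Icc 0 v) = ENNReal.ofReal (∫ t in 0..u, F t v) := by
  rw [jointMeasure, Measure.compProd_apply_prod measurableSet_Icc measurableSet_Icc,
    Measure.restrict_restrict measurableSet_Icc, Icc_inter_Icc, sup_idem, inf_of_le_left hu₁,
    ← hF.lintegral_ofReal hu₀]
  simp_rw [hF.kernel_Icc]

lemma jointMeasure_compl_Icc_prod_Icc :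
    hF.jointMeasure (Icc 0 1 ×ˢ Icc 0 1)ᶜ = 0 := by
  rw [prob_compl_eq_zero_iff (measurableSet_Icc.prod measurableSet_Icc),
    hF.jointMeasure_Icc_prod_Icc zero_le_one le_rfl]
  simp [hF.eq_one _ le_rfl]

lemma map_fst_jointMeasure : hF.jointMeasure.map Prod.fst = volume.restrict (Icc 0 1) :=
  Measure.fst_compProd _ _

lemma map_snd_jointMeasure (h : ∀ v ∈ Ioo 0 1, ∫ t in 0..1, F t v = v) :
    hF.jointMeasure.map Prod.snd = volume.restrict (Icc 0 1) := by
  refine Measure.ext_of_Iic _ _ fun v ↦ ?_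
  rw [Measure.map_apply measurable_snd measurableSet_Iic, ← univ_prod, jointMeasure,
    Measure.compProd_apply_prod MeasurableSet.univ measurableSet_Iic, Measure.restrict_univ,
    Measure.restrict_apply measurableSet_Iic]
  simp_rw [hF.kernel_Iic]
  have hset : Iic v ∩ Icc 0 1 = Icc 0 (min v 1) := by ext; simp; tauto
  rw [hF.lintegral_ofReal zero_le_one, hset, Real.volume_Icc, sub_zero]
  rcases le_or_gt v 0 with hv₀ | hv₀
  · simp [hF.eq_zero _ hv₀, ENNReal.ofReal_of_nonpos (min_le_of_left_le hv₀)]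
  rcases lt_or_ge v 1 with hv₁ | hv₁
  · rw [h v ⟨hv₀, hv₁⟩, min_eq_left hv₁.le]
  · simp [hF.eq_one _ hv₁, hv₁]

end IsUnitCDFFamily

section Gumbel

noncomputable def gumbelNorm (θ x y : ℝ) : ℝ := (x ^ θ + y ^ θ) ^ (1 / θ)

variable {θ x y : ℝ}

lemma gumbelNorm_comm (θ x y : ℝ) : gumbelNorm θ x y = gumbelNorm θ y x := by
  rw [gumbelNorm, add_comm, gumbelNorm]

lemma gumbelNorm_zero_right (hθ : θ ≠ 0) (hx : 0 ≤ x) : gumbelNorm θ x 0 = x := by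
  rw [gumbelNorm, zero_rpow hθ, add_zero, ← rpow_mul hx, mul_one_div_cancel hθ, rpow_one]

lemma gumbelNorm_mono_right (hθ : 0 < θ) (hx : 0 ≤ x) {y₁ y₂ : ℝ} (hy₁ : 0 ≤ y₁) (h : y₁ ≤ y₂) :
    gumbelNorm θ x y₁ ≤ gumbelNorm θ x y₂ := by
  unfold gumbelNorm
  gcongr

lemma le_gumbelNorm_left (hθ : 0 < θ) (hx : 0 ≤ x) (hy : 0 ≤ y) : x ≤ gumbelNorm θ x y := by
  simpa [gumbelNorm_zero_right hθ.ne' hx] using gumbelNorm_mono_right hθ hx le_rfl hy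

lemma le_gumbelNorm_right (hθ : 0 < θ) (hx : 0 ≤ x) (hy : 0 ≤ y) : y ≤ gumbelNorm θ x y :=
  gumbelNorm_comm θ y x ▸ le_gumbelNorm_left hθ hy hx

lemma continuous_gumbelNorm (hθ : 0 ≤ θ) : Continuous fun p : ℝ × ℝ ↦ gumbelNorm θ p.1 p.2 := by
  unfold gumbelNorm
  have := continuous_rpow_const hθ
  have := continuous_rpow_const (one_div_nonneg.2 hθ)
  fun_prop

lemma hasDerivAt_gumbelNorm_left (hθ : 0 < θ) (hx : 0 < x) (hy : 0 ≤ y) :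
    HasDerivAt (fun x ↦ gumbelNorm θ x y) ((x / gumbelNorm θ x y) ^ (θ - 1)) x := by
  have hs : 0 < x ^ θ + y ^ θ := by positivity
  convert ((hasDerivAt_rpow_const (p := θ) (Or.inl hx.ne')).add_const (y ^ θ)).rpow_const
    (p := 1 / θ) (Or.inl hs.ne') using 1
  · rfl
  rw [gumbelNorm, div_rpow hx.le (by positivity), ← rpow_mul hs.le,
    show 1 / θ - 1 = -(1 / θ * (θ - 1)) by field_simp; ring, rpow_neg hs.le]
  field_simp

/-- `∂C/∂u (u, v)` at `u = exp (-x)`, `v = exp (-y)`. -/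
noncomputable def gumbelPartialLog (θ x y : ℝ) : ℝ :=
  exp (x - gumbelNorm θ x y) * (x / gumbelNorm θ x y) ^ (θ - 1)

lemma gumbelPartialLog_nonneg (hθ : 0 < θ) (hx : 0 ≤ x) (hy : 0 ≤ y) :
    0 ≤ gumbelPartialLog θ x y :=
  mul_nonneg (exp_pos _).le
    (rpow_nonneg (div_nonneg hx (hx.trans (le_gumbelNorm_left hθ hx hy))) _)

lemma gumbelPartialLog_zero_right (hθ : 0 < θ) (hx : 0 < x) : gumbelPartialLog θ x 0 = 1 := by
  simp [gumbelPartialLog, gumbelNorm_zero_right hθ.ne' hx.le, hx.ne']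

lemma gumbelPartialLog_antitoneOn (hθ : 1 ≤ θ) (hx : 0 < x) :
    AntitoneOn (gumbelPartialLog θ x) (Ici 0) := by
  intro y₁ hy₁ y₂ _ h
  have hθ₀ : 0 < θ := zero_lt_one.trans_le hθ
  have hA := gumbelNorm_mono_right hθ₀ hx.le hy₁ h
  have hA₁ : 0 < gumbelNorm θ x y₁ := hx.trans_le (le_gumbelNorm_left hθ₀ hx.le hy₁)
  have hx₂ : 0 ≤ x / gumbelNorm θ x y₂ := div_nonneg hx.le (hA₁.le.trans hA)
  unfold gumbelPartialLog
  gcongr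

lemma gumbelPartialLog_le_one (hθ : 1 ≤ θ) (hx : 0 < x) (hy : 0 ≤ y) :
    gumbelPartialLog θ x y ≤ 1 :=
  gumbelPartialLog_zero_right (zero_lt_one.trans_le hθ) hx ▸
    gumbelPartialLog_antitoneOn hθ hx (mem_Ici.2 le_rfl) hy hy

lemma gumbelPartialLog_le_exp (hθ : 1 ≤ θ) (hx : 0 < x) (hy : 0 ≤ y) :
    gumbelPartialLog θ x y ≤ exp (x - y) := by
  have hθ₀ : 0 < θ := zero_lt_one.trans_le hθ
  have hxA := le_gumbelNorm_left hθ₀ hx.le hy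
  have hyA := le_gumbelNorm_right hθ₀ hx.le hy
  calc gumbelPartialLog θ x y ≤ exp (x - gumbelNorm θ x y) * 1 := by
        unfold gumbelPartialLog
        gcongr
        exact rpow_le_one (div_nonneg hx.le (hx.le.trans hxA))
          ((div_le_one₀ (hx.trans_le hxA)).2 hxA) (by linarith)
    _ ≤ exp (x - y) := by rw [mul_one]; gcongr

lemma continuousAt_gumbelPartialLog (hθ : 1 ≤ θ) (hx : 0 < x) (hy : 0 ≤ y) :
    ContinuousAt (gumbelPartialLog θ x) y := by
  have hθ₀ : 0 < θ := zero_lt_one.trans_le hθ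
  have hA : Continuous (gumbelNorm θ x) :=
    (continuous_gumbelNorm hθ₀.le).comp (Continuous.prodMk_right x)
  have hA₀ : gumbelNorm θ x y ≠ 0 := (hx.trans_le (le_gumbelNorm_left hθ₀ hx.le hy)).ne'
  exact (continuous_exp.comp (continuous_const.sub hA)).continuousAt.mul
    ((continuous_rpow_const (sub_nonneg.2 hθ)).continuousAt.comp
      (continuousAt_const.div hA.continuousAt hA₀))

noncomputable def gumbelCopula (θ u v : ℝ) : ℝ := exp (-gumbelNorm θ (-log u) (-log v))

variable {t u v : ℝ}

lemma neg_log_nonneg (hv : v ∈ Ioc 0 1) : 0 ≤ -log v := neg_nonneg.2 (log_nonpos hv.1.le hv.2)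

lemma neg_log_pos (ht : t ∈ Ioo 0 1) : 0 < -log t := neg_pos.2 (log_neg ht.1 ht.2)

lemma hasDerivAt_gumbelCopula_left (hθ : 0 < θ) (ht : t ∈ Ioo 0 1) (hv : v ∈ Ioc 0 1) :
    HasDerivAt (fun t ↦ gumbelCopula θ t v) (gumbelPartialLog θ (-log t) (-log v)) t := by
  convert ((hasDerivAt_gumbelNorm_left hθ (neg_log_pos ht) (neg_log_nonneg hv)).comp t
    (hasDerivAt_log ht.1.ne').neg).neg.exp using 1
  · rfl
  rw [gumbelPartialLog, sub_eq_add_neg, exp_add, exp_neg (log t), exp_log ht.1]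
  simp only [Pi.neg_apply, Function.comp_apply]
  ring

lemma gumbelCopula_le_left (hθ : 0 < θ) (ht : t ∈ Ioc 0 1) (hv : v ∈ Ioc 0 1) :
    gumbelCopula θ t v ≤ t := by
  calc gumbelCopula θ t v ≤ exp (-(-log t)) :=
        exp_le_exp.2 (neg_le_neg (le_gumbelNorm_left hθ (neg_log_nonneg ht) (neg_log_nonneg hv)))
    _ = t := by rw [neg_neg, exp_log ht.1]

lemma tendsto_gumbelCopula_nhdsGT_zero (hθ : 0 < θ) (hv : v ∈ Ioc 0 1) :
    Tendsto (fun t ↦ gumbelCopula θ t v) (𝓝[>] 0) (𝓝 0) :=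
  squeeze_zero' (Eventually.of_forall fun _ ↦ (exp_pos _).le)
    (eventually_of_mem (Ioc_mem_nhdsGT zero_lt_one) fun _ ht ↦ gumbelCopula_le_left hθ ht hv)
    (tendsto_id.mono_left nhdsWithin_le_nhds)

lemma continuousAt_gumbelCopula_left (hθ : 0 ≤ θ) (ht : t ≠ 0) :
    ContinuousAt (fun t ↦ gumbelCopula θ t v) t :=
  continuous_exp.continuousAt.comp ((continuous_gumbelNorm hθ).continuousAt.comp
    ((continuousAt_log ht).neg.prodMk continuousAt_const)).neg

lemma gumbelCopula_one_left (hθ : θ ≠ 0) (hv : v ∈ Ioc 0 1) : gumbelCopula θ 1 v = v := by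
  rw [gumbelCopula, log_one, neg_zero, gumbelNorm_comm,
    gumbelNorm_zero_right hθ (neg_log_nonneg hv), neg_neg, exp_log hv.1]

/-- `∂C/∂u (t, v)` for `t ∈ (0, 1)`; for other `t` any law on `[0, 1]` would do, here `δ₁`. -/
noncomputable def gumbelCondCDF (θ t v : ℝ) : ℝ :=
  if 1 ≤ v then 1 else if v ≤ 0 ∨ t ∉ Ioo 0 1 then 0 else gumbelPartialLog θ (-log t) (-log v)

lemma gumbelCondCDF_of_mem (hθ : 0 < θ) (ht : t ∈ Ioo 0 1) (hv : v ∈ Ioc 0 1) :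
    gumbelCondCDF θ t v = gumbelPartialLog θ (-log t) (-log v) := by
  rcases hv.2.lt_or_eq with hv₁ | rfl
  · simp [gumbelCondCDF, not_le.2 hv₁, not_le.2 hv.1, ht]
  · simp [gumbelCondCDF, gumbelPartialLog_zero_right hθ (neg_log_pos ht)]

lemma gumbelCondCDF_nonneg (hθ : 0 < θ) (t v : ℝ) : 0 ≤ gumbelCondCDF θ t v := by
  unfold gumbelCondCDF
  split_ifs with h₁ h₀
  · exact zero_le_one
  · exact le_rfl
  · push Not at h₁ h₀
    exact gumbelPartialLog_nonneg hθ (neg_log_pos h₀.2).le (neg_log_nonneg ⟨h₀.1, h₁.le⟩)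

lemma gumbelCondCDF_le_one (hθ : 1 ≤ θ) (t v : ℝ) : gumbelCondCDF θ t v ≤ 1 := by
  unfold gumbelCondCDF
  split_ifs with h₁ h₀
  · exact le_rfl
  · exact zero_le_one
  · push Not at h₁ h₀
    exact gumbelPartialLog_le_one hθ (neg_log_pos h₀.2) (neg_log_nonneg ⟨h₀.1, h₁.le⟩)

lemma monotone_gumbelCondCDF (hθ : 1 ≤ θ) (t : ℝ) : Monotone (gumbelCondCDF θ t) := by
  intro v₁ v₂ h
  have hθ₀ : 0 < θ := zero_lt_one.trans_le hθ
  rcases le_or_gt 1 v₂ with hv₂ | hv₂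
  · simpa [gumbelCondCDF, hv₂] using gumbelCondCDF_le_one hθ t v₁
  by_cases h₀ : v₁ ≤ 0 ∨ t ∉ Ioo 0 1
  · rw [gumbelCondCDF, if_neg (h.trans_lt hv₂).not_ge, if_pos h₀]
    exact gumbelCondCDF_nonneg hθ₀ t v₂
  push Not at h₀
  have hv₂₀ : 0 < v₂ := h₀.1.trans_le h
  rw [gumbelCondCDF_of_mem hθ₀ h₀.2 ⟨h₀.1, (h.trans_lt hv₂).le⟩,
    gumbelCondCDF_of_mem hθ₀ h₀.2 ⟨hv₂₀, hv₂.le⟩]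
  exact gumbelPartialLog_antitoneOn hθ (neg_log_pos h₀.2) (neg_log_nonneg ⟨hv₂₀, hv₂.le⟩)
    (neg_log_nonneg ⟨h₀.1, (h.trans_lt hv₂).le⟩) (neg_le_neg (log_le_log h₀.1 h))

lemma gumbelCondCDF_le_div (hθ : 1 ≤ θ) (ht : t ∈ Ioo 0 1) (hv : v ∈ Ico 0 1) :
    gumbelCondCDF θ t v ≤ v / t := by
  rcases hv.1.eq_or_lt with rfl | hv₀
  · norm_num [gumbelCondCDF]
  rw [gumbelCondCDF_of_mem (zero_lt_one.trans_le hθ) ht ⟨hv₀, hv.2.le⟩]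
  calc _ ≤ exp (-log t - -log v) :=
        gumbelPartialLog_le_exp hθ (neg_log_pos ht) (neg_log_nonneg ⟨hv₀, hv.2.le⟩)
    _ = v / t := by rw [sub_neg_eq_add, exp_add, exp_neg, exp_log ht.1, exp_log hv₀, div_eq_inv_mul]

lemma continuousWithinAt_gumbelCondCDF (hθ : 1 ≤ θ) (t v : ℝ) :
    ContinuousWithinAt (gumbelCondCDF θ t) (Ici v) v := by
  have hθ₀ : 0 < θ := zero_lt_one.trans_le hθ
  have of_eq_zero {a : ℝ} (hva : v < a) (h : ∀ w < a, gumbelCondCDF θ t w = 0) :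
      ContinuousWithinAt (gumbelCondCDF θ t) (Ici v) v :=
    (continuousAt_const.congr <|
      (eventually_lt_nhds hva).mono fun w hw ↦ (h w hw).symm).continuousWithinAt
  rcases le_or_gt 1 v with hv₁ | hv₁
  · have h : ∀ w ∈ Ici v, gumbelCondCDF θ t w = 1 := fun w hw ↦ if_pos (hv₁.trans hw)
    exact continuousWithinAt_const.congr h (h v self_mem_Ici)
  by_cases ht : t ∈ Ioo 0 1
  swap
  · exact of_eq_zero hv₁ fun w hw ↦ by simp [gumbelCondCDF, hw.not_ge, ht]
  rcases lt_trichotomy v 0 with hv₀ | rfl | hv₀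
  · exact of_eq_zero hv₀ fun w hw ↦ by simp [gumbelCondCDF, hw.le, (hw.trans zero_lt_one).not_ge]
  · have h0 : gumbelCondCDF θ t 0 = 0 := by norm_num [gumbelCondCDF]
    rw [ContinuousWithinAt, h0]
    refine squeeze_zero' (g := fun w ↦ w / t) (Eventually.of_forall (gumbelCondCDF_nonneg hθ₀ t))
      (eventually_of_mem (Ico_mem_nhdsGE zero_lt_one) fun w hw ↦ gumbelCondCDF_le_div hθ ht hw) ?_
    exact ((continuous_id.div_const t).tendsto' 0 0 (zero_div t)).mono_left nhdsWithin_le_nhds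
  · have hcont : ContinuousAt (fun w ↦ gumbelPartialLog θ (-log t) (-log w)) v :=
      (continuousAt_gumbelPartialLog hθ (neg_log_pos ht) (neg_log_nonneg ⟨hv₀, hv₁.le⟩)).comp
        (f := fun w ↦ -log w) (continuousAt_log hv₀.ne').neg
    refine (hcont.congr (eventually_of_mem (Ioo_mem_nhds hv₀ hv₁) fun w hw ↦ ?_)).continuousWithinAt
    exact (gumbelCondCDF_of_mem hθ₀ ht ⟨hw.1, hw.2.le⟩).symm

lemma measurable_gumbelCondCDF (θ v : ℝ) : Measurable fun t ↦ gumbelCondCDF θ t v := by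
  refine Measurable.ite (.const _) measurable_const
    (Measurable.ite ((MeasurableSet.const _).union measurableSet_Ioo.compl) measurable_const ?_)
  unfold gumbelPartialLog gumbelNorm
  fun_prop

noncomputable def gumbelCondStieltjes (hθ : 1 ≤ θ) (t : ℝ) : StieltjesFunction ℝ where
  toFun := gumbelCondCDF θ t
  mono' := monotone_gumbelCondCDF hθ t
  right_continuous' := continuousWithinAt_gumbelCondCDF hθ t

@[simp]
lemma gumbelCondStieltjes_apply (hθ : 1 ≤ θ) (t v : ℝ) :
    gumbelCondStieltjes hθ t v = gumbelCondCDF θ t v :=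
  rfl

lemma isUnitCDFFamily_gumbelCondStieltjes (hθ : 1 ≤ θ) :
    IsUnitCDFFamily (gumbelCondStieltjes hθ) where
  measurable := measurable_gumbelCondCDF θ
  eq_zero t v hv := by simp [gumbelCondCDF, hv, (hv.trans_lt zero_lt_one).not_ge]
  eq_one t v hv := if_pos hv

lemma intervalIntegral_gumbelCondCDF (hθ : 1 ≤ θ) (hu : u ∈ Ioc 0 1) (hv : v ∈ Ioc 0 1) :
    ∫ t in 0..u, gumbelCondCDF θ t v = gumbelCopula θ u v := by
  have hθ₀ : 0 < θ := zero_lt_one.trans_le hθ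
  rw [intervalIntegral.integral_eq_sub_of_hasDerivAt_of_tendsto (f := fun t ↦ gumbelCopula θ t v)
    (f' := fun t ↦ gumbelCondCDF θ t v) hu.1 (fun t ht ↦ ?_)
    ((isUnitCDFFamily_gumbelCondStieltjes hθ).intervalIntegrable v 0 u)
    (tendsto_gumbelCopula_nhdsGT_zero hθ₀ hv)
    ((continuousAt_gumbelCopula_left hθ₀.le hu.1.ne').tendsto.mono_left nhdsWithin_le_nhds),
    sub_zero]
  have ht₁ : t ∈ Ioo 0 1 := ⟨ht.1, ht.2.trans_le hu.2⟩
  rw [gumbelCondCDF_of_mem hθ₀ ht₁ hv]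
  exact hasDerivAt_gumbelCopula_left hθ₀ ht₁ hv

end Gumbel

/-- The Gumbel function `C_Gu(u,v) = exp(−((−ln u)^θ + (−ln v)^θ)^{1/θ})`, `θ ≥ 1`,
is a copula. -/
theorem gumbel_is_copula (θ : ℝ) (hθ : 1 ≤ θ) :
    ∃ ν : Measure (ℝ × ℝ),
      IsProbabilityMeasure ν ∧
      ν ((Set.Icc (0 : ℝ) 1 ×ˢ Set.Icc (0 : ℝ) 1)ᶜ) = 0 ∧
      ν.map Prod.fst = volume.restrict (Set.Icc (0 : ℝ) 1) ∧
      ν.map Prod.snd = volume.restrict (Set.Icc (0 : ℝ) 1) ∧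
      ∀ u ∈ Set.Ioc (0 : ℝ) 1, ∀ v ∈ Set.Ioc (0 : ℝ) 1,
        (ν (Set.Icc 0 u ×ˢ Set.Icc 0 v)).toReal =
          Real.exp (-(((-Real.log u) ^ θ + (-Real.log v) ^ θ) ^ (1 / θ))) := by
  have hF := isUnitCDFFamily_gumbelCondStieltjes hθ
  refine ⟨hF.jointMeasure, inferInstance, hF.jointMeasure_compl_Icc_prod_Icc,
    hF.map_fst_jointMeasure, hF.map_snd_jointMeasure fun v hv ↦ ?_, fun u hu v hv ↦ ?_⟩
  · simp only [gumbelCondStieltjes_apply]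
    rw [intervalIntegral_gumbelCondCDF hθ ⟨one_pos, le_rfl⟩ ⟨hv.1, hv.2.le⟩,
      gumbelCopula_one_left (by positivity) ⟨hv.1, hv.2.le⟩]
  · simp only [hF.jointMeasure_Icc_prod_Icc hu.1.le hu.2, gumbelCondStieltjes_apply]
    rw [intervalIntegral_gumbelCondCDF hθ hu hv]
    exact ENNReal.toReal_ofReal (exp_pos _).le
end

section
/- Let D₁ and D₂ be independent random variables, each exponentially distributed with rate 1. Then there exists t₀ ∈ (0,1) such that for all t ∈ (0, t₀), F_{D₁+D₂}⁻¹(t) > F_{D₁}⁻¹(t) + F_{D₂}⁻¹(t) = 2·(−ln(1−t)); that is, contrary to the prevalent intuition, pooling two i.i.d. exponential demands leads to strictly higher inventory levels for all sufficiently small margin ratios. -/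
open MeasureTheory ProbabilityTheory Set Filter Topology

/-!
Write `s = -log (1 - t)` for the `t`-quantile of a rate-one exponential law. For nonnegative
independent demands, `D₁ + D₂ ≤ 2s` forces both `D₁ ≤ 2s` and `D₂ ≤ 2s`, so the pooled cdf at the
dedicated level `2s` is at most `F(2s)² = (t (2 - t))²`. This is `O(t²)`, hence below `t` for
small `t`, and right continuity of the cdf pushes the pooled `t`-quantile strictly above `2s`.
-/

lemma lt_quantile_of_cdf_lt (μ : Measure ℝ) [IsProbabilityMeasure μ] {x t : ℝ} (ht : t < 1)
    (hx : cdf μ x < t) : x < quantile μ t := by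
  obtain ⟨y, hyt, hxy⟩ : ∃ y, cdf μ y < t ∧ x < y := by
    have hev : ∀ᶠ y in 𝓝[>] x, cdf μ y < t :=
      ((cdf μ).right_continuous x).eventually_lt continuousWithinAt_const hx
        |>.filter_mono (nhdsWithin_mono _ Ioi_subset_Ici_self)
    exact (hev.and self_mem_nhdsWithin).exists
  have hne : {z : ℝ | t ≤ cdf μ z}.Nonempty := ((tendsto_cdf_atTop μ).eventually_const_le ht).exists
  refine hxy.trans_le (le_csInf hne fun z hz => ?_)
  by_contra! hzy
  exact (hz.trans ((cdf μ).mono hzy.le)).not_gt hyt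

lemma cdf_map_add_le_mul {Ω : Type*} [MeasurableSpace Ω] {P : Measure Ω}
    [IsProbabilityMeasure P] {X Y : Ω → ℝ} (hX : Measurable X) (hY : Measurable Y)
    (hXY : IndepFun X Y P) (hX₀ : 0 ≤ᵐ[P] X) (hY₀ : 0 ≤ᵐ[P] Y) (x : ℝ) :
    cdf (P.map (X + Y)) x ≤ cdf (P.map X) x * cdf (P.map Y) x := by
  have : IsProbabilityMeasure (P.map (X + Y)) :=
    Measure.isProbabilityMeasure_map (hX.add hY).aemeasurable
  have : IsProbabilityMeasure (P.map X) := Measure.isProbabilityMeasure_map hX.aemeasurable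
  have : IsProbabilityMeasure (P.map Y) := Measure.isProbabilityMeasure_map hY.aemeasurable
  have hsub : (X + Y) ⁻¹' Iic x ≤ᵐ[P] (X ⁻¹' Iic x ∩ Y ⁻¹' Iic x : Set Ω) := by
    filter_upwards [hX₀, hY₀] with ω (hXω : 0 ≤ X ω) (hYω : 0 ≤ Y ω) (hω : X ω + Y ω ≤ x)
    exact ⟨show X ω ≤ x by linarith, show Y ω ≤ x by linarith⟩
  rw [cdf_eq_real, cdf_eq_real, cdf_eq_real, map_measureReal_apply (hX.add hY) measurableSet_Iic,
    map_measureReal_apply hX measurableSet_Iic, map_measureReal_apply hY measurableSet_Iic,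
    measureReal_def, measureReal_def, measureReal_def, ← ENNReal.toReal_mul,
    ← hXY.measure_inter_preimage_eq_mul _ _ measurableSet_Iic measurableSet_Iic]
  exact ENNReal.toReal_mono (measure_ne_top _ _) (measure_mono_ae hsub)

lemma ae_nonneg_expMeasure (r : ℝ) : ∀ᵐ x ∂expMeasure r, 0 ≤ x := by
  rw [ae_iff]
  simp only [not_le, Iio_def]
  rw [expMeasure, gammaMeasure, withDensity_apply _ measurableSet_Iio]
  exact lintegral_gammaPDF_of_nonpos le_rfl

lemma ae_nonneg_of_map_eq_expMeasure {Ω : Type*} [MeasurableSpace Ω] {P : Measure Ω}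
    {X : Ω → ℝ} (hX : Measurable X) {r : ℝ} (hXr : P.map X = expMeasure r) : 0 ≤ᵐ[P] X :=
  ae_of_ae_map (p := (0 ≤ ·)) hX.aemeasurable (hXr ▸ ae_nonneg_expMeasure r)

lemma le_cdf_expMeasure_iff {r t x : ℝ} (hr : 0 < r) (ht : t ∈ Ioo (0 : ℝ) 1) :
    t ≤ cdf (expMeasure r) x ↔ -Real.log (1 - t) / r ≤ x := by
  have hlog : Real.log (1 - t) < 0 := Real.log_neg (by linarith [ht.2]) (by linarith [ht.1])
  rw [cdf_expMeasure_eq hr]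
  split_ifs with hx
  · rw [div_le_iff₀ hr, le_sub_comm, ← Real.le_log_iff_exp_le (by linarith [ht.2])]
    constructor <;> intro h <;> linarith
  · have hpos : 0 < -Real.log (1 - t) / r := div_pos (by linarith) hr
    constructor <;> intro h <;> linarith [ht.1, not_le.1 hx]

lemma quantile_expMeasure {r t : ℝ} (hr : 0 < r) (ht : t ∈ Ioo (0 : ℝ) 1) :
    quantile (expMeasure r) t = -Real.log (1 - t) / r := by
  simp_rw [quantile, le_cdf_expMeasure_iff hr ht, Ici_def]
  exact csInf_Ici

lemma cdf_expMeasure_nat_mul_quantile {r t : ℝ} (hr : 0 < r) (ht : t ∈ Ioo (0 : ℝ) 1) (n : ℕ) :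
    cdf (expMeasure r) (n * quantile (expMeasure r) t) = 1 - (1 - t) ^ n := by
  have hq : 0 ≤ n * quantile (expMeasure r) t := by
    rw [quantile_expMeasure hr ht]
    exact mul_nonneg n.cast_nonneg
      (div_nonneg (neg_nonneg.2 (Real.log_nonpos (by linarith [ht.2]) (by linarith [ht.1]))) hr.le)
  rw [cdf_expMeasure_eq hr, if_pos hq, quantile_expMeasure hr ht,
    show -(r * (n * (-Real.log (1 - t) / r))) = n * Real.log (1 - t) by field_simp,
    Real.exp_nat_mul, Real.exp_log (by linarith [ht.2])]

/-- Pooling two i.i.d. rate-one exponential demands leads to strictly higher inventory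
levels for all sufficiently small margin ratios; the dedicated level is `2·(−ln(1−t))`. -/
theorem exponential_pooling_anomaly {Ω : Type*} [MeasurableSpace Ω]
    (P : Measure Ω) [IsProbabilityMeasure P] (D₁ D₂ : Ω → ℝ)
    (hD₁ : Measurable D₁) (hD₂ : Measurable D₂)
    (hind : IndepFun D₁ D₂ P)
    (h₁ : Measure.map D₁ P = expMeasure 1) (h₂ : Measure.map D₂ P = expMeasure 1) :
    ∃ t₀ ∈ Set.Ioo (0 : ℝ) 1, ∀ t ∈ Set.Ioo (0 : ℝ) t₀,
      quantile (Measure.map D₁ P) t + quantile (Measure.map D₂ P) t <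
        quantile (Measure.map (fun ω => D₁ ω + D₂ ω) P) t ∧
      quantile (Measure.map D₁ P) t + quantile (Measure.map D₂ P) t =
        2 * (-Real.log (1 - t)) := by
  refine ⟨1 / 4, by norm_num, fun t ht => ?_⟩
  have ht' : t ∈ Ioo (0 : ℝ) 1 := ⟨ht.1, by linarith [ht.2]⟩
  have hdedicated : quantile (P.map D₁) t + quantile (P.map D₂) t =
      (2 : ℕ) * quantile (expMeasure 1) t := by
    rw [h₁, h₂]; push_cast; ring
  refine ⟨?_, by rw [hdedicated, quantile_expMeasure one_pos ht']; push_cast; ring⟩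
  have : IsProbabilityMeasure (P.map fun ω => D₁ ω + D₂ ω) :=
    Measure.isProbabilityMeasure_map (hD₁.add hD₂).aemeasurable
  refine lt_quantile_of_cdf_lt _ ht'.2 ?_
  calc _ ≤ cdf (P.map D₁) _ * cdf (P.map D₂) _ :=
        cdf_map_add_le_mul hD₁ hD₂ hind (ae_nonneg_of_map_eq_expMeasure hD₁ h₁)
          (ae_nonneg_of_map_eq_expMeasure hD₂ h₂) _
    _ = (1 - (1 - t) ^ 2) ^ 2 := by
        rw [hdedicated, h₁, h₂, cdf_expMeasure_nat_mul_quantile one_pos ht', ← sq]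
    _ < t := by
        have hsmall : t * (2 - t) ^ 2 < 1 := by nlinarith [ht.1, ht.2]
        nlinarith [mul_lt_mul_of_pos_left hsmall ht.1]
end
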